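/- arXiv:2605.14273 — 10 statements merged into one kernel-verified Lean document; each statement's English description precedes it below -/
import Mathlib

section
/- Strong duality for generalized dual decomposition: Let X be a nonempty set, N ≥ 1, and let f_i : X → ℝ for i = 1,…,N with {∑_{i=1}^N f_i(x) : x ∈ X} bounded below. Consider the set D of all dual bounds ∑_{i=1}^N inf_{x ∈ X} (f_i(x) + g_i(x)), taken over all families g_i : X → ℝ such that ∑_{i=1}^N g_i(x) = 0 for all x ∈ X and each set {f_i(x) + g_i(x) : x ∈ X} is bounded below. Then v* := inf_{x ∈ X} ∑_{i=1}^N f_i(x) is the greatest element of D, i.e., v* ∈ D and d ≤ v* for every d ∈ D. -/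
/-! The primal value is never below a dual bound, since at each point the regularized pieces
sum back to the objective (weak duality). It is attained by the averaging regularizer
`g i = (∑ j, f j) / N - f i`, which turns every piece into `(∑ j, f j) / N`, so that each
infimum is `v* / N` and the `N` of them add up to `v*`. -/

open Finset Pointwise

section Duality

variable {α ι : Type*} [Fintype ι] {X : Set α}

theorem sum_sInf_image_le_sInf_image_sum (hX : X.Nonempty) {h : ι → α → ℝ}
    (hbdd : ∀ i, BddBelow (h i '' X)) :
    ∑ i, sInf (h i '' X) ≤ sInf ((fun x => ∑ i, h i x) '' X) := by
  refine le_csInf (hX.image _) ?_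
  rintro _ ⟨x, hx, rfl⟩
  exact sum_le_sum fun i _ => csInf_le (hbdd i) ⟨x, hx, rfl⟩

theorem weak_duality (hX : X.Nonempty) (f g : ι → α → ℝ) (hg : ∀ x ∈ X, ∑ i, g i x = 0)
    (hbdd : ∀ i, BddBelow ((fun x => f i x + g i x) '' X)) :
    ∑ i, sInf ((fun x => f i x + g i x) '' X) ≤ sInf ((fun x => ∑ i, f i x) '' X) := by
  have hsum : (fun x => ∑ i, (f i x + g i x)) '' X = (fun x => ∑ i, f i x) '' X :=
    Set.image_congr fun x hx => by rw [sum_add_distrib, hg x hx, add_zero]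
  exact hsum ▸ sum_sInf_image_le_sInf_image_sum hX hbdd

theorem sInf_image_div_const {F : α → ℝ} {c : ℝ} (hc : 0 ≤ c) :
    sInf ((fun x => F x / c) '' X) = sInf (F '' X) / c := by
  have hdiv : (fun x => F x / c) '' X = c⁻¹ • (F '' X) := by
    rw [← Set.image_smul, Set.image_image]
    exact Set.image_congr fun x _ => by rw [smul_eq_mul, div_eq_inv_mul]
  rw [hdiv, Real.sInf_smul_of_nonneg (inv_nonneg.2 hc), smul_eq_mul, div_eq_inv_mul]

noncomputable def averagingRegularizer (f : ι → α → ℝ) (i : ι) (x : α) : ℝ :=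
  (∑ j, f j x) / Fintype.card ι - f i x

theorem add_averagingRegularizer (f : ι → α → ℝ) (i : ι) (x : α) :
    f i x + averagingRegularizer f i x = (∑ j, f j x) / Fintype.card ι := by
  rw [averagingRegularizer, add_sub_cancel]

theorem sum_averagingRegularizer [Nonempty ι] (f : ι → α → ℝ) (x : α) :
    ∑ i, averagingRegularizer f i x = 0 := by
  simp only [averagingRegularizer, sum_sub_distrib, sum_const, card_univ, nsmul_eq_mul]
  rw [mul_div_cancel₀ _ (Nat.cast_ne_zero.2 Fintype.card_ne_zero), sub_self]

theorem bddBelow_image_add_averagingRegularizer (f : ι → α → ℝ)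
    (hbdd : BddBelow ((fun x => ∑ i, f i x) '' X)) (i : ι) :
    BddBelow ((fun x => f i x + averagingRegularizer f i x) '' X) := by
  obtain ⟨b, hb⟩ := hbdd
  refine ⟨b / Fintype.card ι, ?_⟩
  rintro _ ⟨x, hx, rfl⟩
  dsimp only
  rw [add_averagingRegularizer]
  exact div_le_div_of_nonneg_right (hb ⟨x, hx, rfl⟩) (Nat.cast_nonneg _)

theorem sum_sInf_image_add_averagingRegularizer [Nonempty ι] (f : ι → α → ℝ) :
    ∑ i, sInf ((fun x => f i x + averagingRegularizer f i x) '' X)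
      = sInf ((fun x => ∑ i, f i x) '' X) := by
  simp only [add_averagingRegularizer, sInf_image_div_const (Nat.cast_nonneg _), sum_const,
    card_univ, nsmul_eq_mul]
  exact mul_div_cancel₀ _ (Nat.cast_ne_zero.2 Fintype.card_ne_zero)

end Duality

/-- Strong duality for generalized dual decomposition: the primal value is the
greatest element of the set of all dual bounds. -/
theorem gdd_strong_duality {α : Type*} (X : Set α) (hX : X.Nonempty)
    (N : ℕ) (hN : 1 ≤ N) (f : Fin N → α → ℝ)
    (hbdd : BddBelow ((fun x => ∑ i, f i x) '' X)) :
    IsGreatest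
      {d : ℝ | ∃ g : Fin N → α → ℝ,
        (∀ x ∈ X, ∑ i, g i x = 0) ∧
        (∀ i, BddBelow ((fun x => f i x + g i x) '' X)) ∧
        d = ∑ i, sInf ((fun x => f i x + g i x) '' X)}
      (sInf ((fun x => ∑ i, f i x) '' X)) := by
  have : Nonempty (Fin N) := ⟨⟨0, hN⟩⟩
  refine ⟨⟨averagingRegularizer f, fun x _ => sum_averagingRegularizer f x,
    bddBelow_image_add_averagingRegularizer f hbdd,
    (sum_sInf_image_add_averagingRegularizer f).symm⟩, ?_⟩
  rintro d ⟨g, hg, hgbdd, rfl⟩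
  exact weak_duality hX f g hg hgbdd
end

section
/- Dual representation of standard dual decomposition over a finite set: Let X be a nonempty finite subset of ℝ^n, N ≥ 1, and f_i : X → ℝ for i = 1,…,N. Then sup over all λ_1,…,λ_N ∈ ℝ^n with ∑_{i=1}^N λ_i = 0 of ∑_{i=1}^N min_{x ∈ X} (f_i(x) + ⟨λ_i, x⟩) equals the minimum, over all families (μ_i)_{i=1}^N of probability weights on X (μ_i : X → [0,1] with ∑_{x∈X} μ_i(x) = 1) that share a common barycenter (∑_{x∈X} μ_i(x)·x is the same vector for all i), of ∑_{i=1}^N ∑_{x∈X} μ_i(x) f_i(x). (This minimum is min_{x ∈ conv(X)} ∑_{i=1}^N co(f_i)(x), where co(f_i) denotes the convex envelope of f_i over X.) -/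
/-!
Weak duality is the estimate `min_x (f i x + ⟪λ i, x⟫) ≤ ∑ x, μ i x * (f i x + ⟪λ i, x⟫)`,
summed over `i`: the inner-product terms cancel since `∑ i, λ i = 0` and the barycenters of the
`μ i` agree. For the converse, let `C ⊆ (ι → E) × ℝ` be the convex hull of the points
`(σ, ∑ i, f i (σ i))` with `σ i ∈ X`. The marginals of the weights representing a point of `C`
above the diagonal form a primal feasible family, so the lowest point `p` of `C` above the
diagonal (it exists by compactness) is a primal value. For `q < p`, a functional strictly
separating `C` from `diagonal × (-∞, q]` vanishes on the diagonal, so it is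
`w ↦ ∑ i, ⟪λ i, w i⟫` with `∑ i, λ i = 0`, and the dual value at `λ` exceeds `q`.
-/

open Finset
open scoped InnerProductSpace

section Separation

variable {V : Type*} [AddCommGroup V] [Module ℝ V] [TopologicalSpace V] [IsTopologicalAddGroup V]
  [ContinuousSMul ℝ V] [LocallyConvexSpace ℝ V]

theorem exists_clm_lt_add_of_isCompact_of_convex {C : Set (V × ℝ)} (hCc : IsCompact C)
    (hCv : Convex ℝ C) {K : Submodule ℝ V} (hK : IsClosed (K : Set V)) {q : ℝ}
    (hq : ∀ c ∈ C, c.1 ∈ K → q < c.2) {c₀ : V × ℝ} (hc₀ : c₀ ∈ C) (hc₀K : c₀.1 ∈ K) :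
    ∃ ℓ : V →L[ℝ] ℝ, (∀ k ∈ K, ℓ k = 0) ∧ ∀ c ∈ C, q < c.2 + ℓ c.1 := by
  have hdisj : Disjoint C ((K : Set V) ×ˢ Set.Iic q) :=
    Set.disjoint_left.2 fun c hc hcF => (hq c hc hcF.1).not_ge hcF.2
  obtain ⟨φ, u, v, hφC, huv, hφF⟩ := geometric_hahn_banach_compact_closed hCv hCc
    (K.convex.prod (convex_Iic q)) (hK.prod isClosed_Iic) hdisj
  have hsep : ∀ c ∈ C, ∀ k ∈ K, φ c < φ (k, q) := fun c hc k hk =>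
    ((hφC c hc).trans huv).trans (hφF (k, q) ⟨hk, le_refl q⟩)
  set ψ := φ.comp (ContinuousLinearMap.inl ℝ V ℝ)
  set β := φ (0, 1)
  have hφ : ∀ c : V × ℝ, φ c = ψ c.1 + c.2 * β := fun c => by
    conv_lhs => rw [show c = (c.1, 0) + c.2 • ((0 : V), (1 : ℝ)) by ext <;> simp]
    rw [map_add, map_smul, smul_eq_mul]
    rfl
  -- `ψ` is bounded below on the subspace `K`, hence vanishes there.
  have hψK : ∀ k ∈ K, ψ k = 0 := by
    intro k hk
    by_contra hψk
    have h := hsep c₀ hc₀ (((φ c₀ - q * β - 1) / ψ k) • k) (K.smul_mem _ hk)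
    rw [hφ (_, q), map_smul, smul_eq_mul, div_mul_cancel₀ _ hψk] at h
    linarith
  have hβ : β < 0 := by
    have h := hsep c₀ hc₀ 0 K.zero_mem
    rw [hφ c₀, hφ (0, q), hψK _ hc₀K, map_zero] at h
    nlinarith [hq c₀ hc₀ hc₀K]
  refine ⟨β⁻¹ • ψ, fun k hk => by simp [hψK k hk], fun c hc => ?_⟩
  have h := hsep c hc 0 K.zero_mem
  rw [hφ c, hφ (0, q), map_zero, zero_add] at h
  have hdiv : (c.2 + β⁻¹ * ψ c.1) * β = ψ c.1 + c.2 * β := by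
    field_simp [hβ.ne]
    ring
  show q < c.2 + β⁻¹ * ψ c.1
  rwa [← mul_lt_mul_right_of_neg hβ, hdiv]

end Separation

section Diagonal

variable (ι E : Type*) [AddCommGroup E] [Module ℝ E]

def diagonalSubmodule : Submodule ℝ (ι → E) where
  carrier := {w | ∀ i j, w i = w j}
  add_mem' ha hb i j := by simp [ha i j, hb i j]
  zero_mem' _ _ := rfl
  smul_mem' c w hw i j := by simp [hw i j]

variable {ι E}

theorem isClosed_diagonalSubmodule [TopologicalSpace E] [T2Space E] :
    IsClosed (diagonalSubmodule ι E : Set (ι → E)) := by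
  show IsClosed {w : ι → E | ∀ i j, w i = w j}
  simp only [Set.ofPred_forall]
  exact isClosed_iInter fun i => isClosed_iInter fun j =>
    isClosed_eq (continuous_apply i) (continuous_apply j)

end Diagonal

section InnerProduct

variable {ι E : Type*} [Fintype ι] [NormedAddCommGroup E] [InnerProductSpace ℝ E]

theorem sum_inner_eq_zero_of_mem_diagonalSubmodule {lam w : ι → E} (hlam : ∑ i, lam i = 0)
    (hw : w ∈ diagonalSubmodule ι E) : ∑ i, ⟪lam i, w i⟫_ℝ = 0 := by
  rcases isEmpty_or_nonempty ι with hι | ⟨⟨i₀⟩⟩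
  · simp
  · rw [Finset.sum_congr rfl fun i _ => by rw [hw i i₀], ← sum_inner, hlam, inner_zero_left]

theorem exists_sum_eq_zero_and_eq_sum_inner [CompleteSpace E]
    (ℓ : (ι → E) →L[ℝ] ℝ) (hℓ : ∀ w ∈ diagonalSubmodule ι E, ℓ w = 0) :
    ∃ lam : ι → E, ∑ i, lam i = 0 ∧ ∀ w, ℓ w = ∑ i, ⟪lam i, w i⟫_ℝ := by
  classical
  set lam : ι → E := fun i =>
    (InnerProductSpace.toDual ℝ E).symm (ℓ.comp (ContinuousLinearMap.single ℝ (fun _ => E) i))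
  have hrepr : ∀ w, ℓ w = ∑ i, ⟪lam i, w i⟫_ℝ := fun w => by
    conv_lhs => rw [← Finset.univ_sum_single w, map_sum]
    simp [lam, InnerProductSpace.toDual_symm_apply]
  refine ⟨lam, ?_, hrepr⟩
  rw [← inner_self_eq_zero (𝕜 := ℝ), sum_inner, ← hrepr fun _ => ∑ j, lam j]
  exact hℓ _ fun _ _ => rfl

end InnerProduct

theorem Finset.sum_fiberwise_smul_comp {κ α R M : Type*} [Fintype κ] [DecidableEq α] [Semiring R]
    [AddCommMonoid M] [Module R M] {X : Finset α} {σ : κ → α} (hσ : ∀ k, σ k ∈ X) (w : κ → R)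
    (h : α → M) : ∑ x ∈ X, (∑ k with σ k = x, w k) • h x = ∑ k, w k • h (σ k) := by
  simp_rw [Finset.sum_smul]
  rw [← Finset.sum_fiberwise_of_maps_to (g := σ) fun k _ => hσ k]
  refine Finset.sum_congr rfl fun x _ => Finset.sum_congr rfl fun k hk => ?_
  rw [(Finset.mem_filter.1 hk).2]

section SeparableGraph

variable {ι E : Type*} [Fintype ι]

def separableGraph (X : Finset E) (f : ι → E → ℝ) : Set ((ι → E) × ℝ) :=
  (fun σ => (σ, ∑ i, f i (σ i))) '' Set.univ.pi fun _ => (X : Set E)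

variable {X : Finset E} {f : ι → E → ℝ}

theorem mk_mem_separableGraph {σ : ι → E} (hσ : ∀ i, σ i ∈ X) :
    (σ, ∑ i, f i (σ i)) ∈ separableGraph X f :=
  ⟨σ, fun i _ => hσ i, rfl⟩

theorem finite_separableGraph (X : Finset E) (f : ι → E → ℝ) : (separableGraph X f).Finite :=
  (Set.Finite.pi fun _ => X.finite_toSet).image _

variable [AddCommGroup E] [Module ℝ E]

def primalValues (X : Finset E) (f : ι → E → ℝ) : Set ℝ :=
  {d | ∃ μ : ι → E → ℝ, (∀ i, ∀ x ∈ X, 0 ≤ μ i x ∧ μ i x ≤ 1) ∧ (∀ i, ∑ x ∈ X, μ i x = 1) ∧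
    (∀ i j, ∑ x ∈ X, μ i x • x = ∑ x ∈ X, μ j x • x) ∧ d = ∑ i, ∑ x ∈ X, μ i x * f i x}

theorem snd_mem_primalValues {b : (ι → E) × ℝ} (hb : b ∈ convexHull ℝ (separableGraph X f))
    (hbK : b.1 ∈ diagonalSubmodule ι E) : b.2 ∈ primalValues X f := by
  classical
  obtain ⟨κ, _, w, z, hw0, hw1, hz, rfl⟩ := mem_convexHull_iff_exists_fintype.1 hb
  choose σ hσ hzσ using hz
  obtain rfl : z = fun k => (σ k, ∑ i, f i (σ k i)) := funext fun k => (hzσ k).symm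
  have hσX : ∀ i k, σ k i ∈ X := fun i k => hσ k i (Set.mem_univ i)
  set μ : ι → E → ℝ := fun i x => ∑ k with σ k i = x, w k
  have hμ0 : ∀ i x, 0 ≤ μ i x := fun i x => sum_nonneg fun k _ => hw0 k
  have hμ1 : ∀ i, ∑ x ∈ X, μ i x = 1 := fun i => by
    simpa [hw1] using Finset.sum_fiberwise_smul_comp (hσX i) w fun _ => (1 : ℝ)
  have hbar : ∀ i, ∑ x ∈ X, μ i x • x = ∑ k, w k • σ k i := fun i =>
    Finset.sum_fiberwise_smul_comp (hσX i) w id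
  refine ⟨μ, fun i x hx => ⟨hμ0 i x, ?_⟩, hμ1, fun i j => ?_, ?_⟩
  · exact hμ1 i ▸ single_le_sum (fun y _ => hμ0 i y) hx
  · simpa [hbar, Prod.fst_sum, Finset.sum_apply] using hbK i j
  · simp_rw [Prod.snd_sum, Prod.smul_snd, smul_eq_mul, mul_sum]
    rw [sum_comm]
    exact sum_congr rfl fun i _ => by
      simpa using (Finset.sum_fiberwise_smul_comp (hσX i) w (f i)).symm

theorem isCompact_convexHull_separableGraph [TopologicalSpace E] [IsTopologicalAddGroup E]
    [ContinuousSMul ℝ E] (X : Finset E) (f : ι → E → ℝ) :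
    IsCompact (convexHull ℝ (separableGraph X f)) :=
  (finite_separableGraph X f).isCompact_convexHull ℝ

theorem exists_lowest_mem_convexHull_separableGraph [TopologicalSpace E] [T2Space E]
    [IsTopologicalAddGroup E] [ContinuousSMul ℝ E] (hX : X.Nonempty) (f : ι → E → ℝ) :
    ∃ b ∈ convexHull ℝ (separableGraph X f), b.1 ∈ diagonalSubmodule ι E ∧
      ∀ c ∈ convexHull ℝ (separableGraph X f), c.1 ∈ diagonalSubmodule ι E → b.2 ≤ c.2 := by
  obtain ⟨b, ⟨hbC, hbK⟩, hbmin⟩ := ((isCompact_convexHull_separableGraph X f).inter_right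
    (isClosed_diagonalSubmodule.preimage continuous_fst)).exists_isMinOn
    ⟨_, subset_convexHull ℝ _ (mk_mem_separableGraph fun _ => hX.choose_spec), fun _ _ => rfl⟩
    continuous_snd.continuousOn
  exact ⟨b, hbC, hbK, fun c hc hcK => hbmin ⟨hc, hcK⟩⟩

end SeparableGraph

section Duality

variable {ι E : Type*} [Fintype ι] [NormedAddCommGroup E] [InnerProductSpace ℝ E]
  {X : Finset E} (hX : X.Nonempty) (f : ι → E → ℝ)

def dualValues : Set ℝ :=
  {d | ∃ lam : ι → E, ∑ i, lam i = 0 ∧ d = ∑ i, X.inf' hX fun x => f i x + ⟪lam i, x⟫_ℝ}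

theorem dualValues_nonempty : (dualValues hX f).Nonempty :=
  ⟨_, 0, by simp, rfl⟩

theorem inf'_add_inner_le (g : E → ℝ) (lam : E) {μ : E → ℝ} (hμ0 : ∀ x ∈ X, 0 ≤ μ x)
    (hμ1 : ∑ x ∈ X, μ x = 1) :
    X.inf' hX (fun x => g x + ⟪lam, x⟫_ℝ) ≤ ∑ x ∈ X, μ x * g x + ⟪lam, ∑ x ∈ X, μ x • x⟫_ℝ := by
  refine (inf_le_centerMass (f := fun x => g x + ⟪lam, x⟫_ℝ) hμ0 (hμ1 ▸ one_pos)).trans_eq ?_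
  simp [centerMass_eq_of_sum_1 _ _ hμ1, inner_sum, real_inner_smul_right, mul_add, sum_add_distrib]

variable {hX f} in
theorem le_of_mem_dualValues_of_mem_primalValues {d p : ℝ} (hd : d ∈ dualValues hX f)
    (hp : p ∈ primalValues X f) : d ≤ p := by
  obtain ⟨lam, hlam, rfl⟩ := hd
  obtain ⟨μ, hμ01, hμ1, hbar, rfl⟩ := hp
  calc ∑ i, X.inf' hX (fun x => f i x + ⟪lam i, x⟫_ℝ)
      ≤ ∑ i, (∑ x ∈ X, μ i x * f i x + ⟪lam i, ∑ x ∈ X, μ i x • x⟫_ℝ) :=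
        sum_le_sum fun i _ =>
          inf'_add_inner_le hX (f i) (lam i) (fun x hx => (hμ01 i x hx).1) (hμ1 i)
    _ = ∑ i, ∑ x ∈ X, μ i x * f i x := by
        rw [sum_add_distrib, sum_inner_eq_zero_of_mem_diagonalSubmodule hlam hbar, add_zero]

theorem exists_gt_mem_dualValues [CompleteSpace E] {q : ℝ}
    (hq : ∀ c ∈ convexHull ℝ (separableGraph X f), c.1 ∈ diagonalSubmodule ι E → q < c.2) :
    ∃ d ∈ dualValues hX f, q < d := by
  obtain ⟨ℓ, hℓK, hℓ⟩ := exists_clm_lt_add_of_isCompact_of_convex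
    (isCompact_convexHull_separableGraph X f) (convex_convexHull ℝ _) isClosed_diagonalSubmodule
    hq (subset_convexHull ℝ _ (mk_mem_separableGraph fun _ => hX.choose_spec)) fun _ _ => rfl
  obtain ⟨lam, hlam, hℓlam⟩ := exists_sum_eq_zero_and_eq_sum_inner ℓ hℓK
  choose σ hσX hσ using fun i => X.exists_mem_eq_inf' hX fun x => f i x + ⟪lam i, x⟫_ℝ
  refine ⟨_, ⟨lam, hlam, rfl⟩, ?_⟩
  have h := hℓ _ (subset_convexHull ℝ _ (mk_mem_separableGraph (f := f) hσX))
  simp only [hℓlam] at h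
  simpa only [hσ, sum_add_distrib] using h

end Duality

theorem dd_dual_representation_general (n : ℕ) (N : ℕ)
    (X : Finset (EuclideanSpace ℝ (Fin n))) (hX : X.Nonempty)
    (f : Fin N → EuclideanSpace ℝ (Fin n) → ℝ) :
    IsLeast
      {d : ℝ | ∃ μ : Fin N → EuclideanSpace ℝ (Fin n) → ℝ,
        (∀ i, ∀ x ∈ X, 0 ≤ μ i x ∧ μ i x ≤ 1) ∧
        (∀ i, ∑ x ∈ X, μ i x = 1) ∧
        (∀ i j, ∑ x ∈ X, μ i x • x = ∑ x ∈ X, μ j x • x) ∧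
        d = ∑ i, ∑ x ∈ X, μ i x * f i x}
      (sSup {d : ℝ | ∃ lam : Fin N → EuclideanSpace ℝ (Fin n),
        ∑ i, lam i = 0 ∧
        d = ∑ i, X.inf' hX (fun x => f i x + (inner ℝ (lam i) x : ℝ))}) := by
  change IsLeast (primalValues X f) (sSup (dualValues hX f))
  obtain ⟨b, hbC, hbK, hbmin⟩ := exists_lowest_mem_convexHull_separableGraph hX f
  have hbP : b.2 ∈ primalValues X f := snd_mem_primalValues hbC hbK
  have hsup : sSup (dualValues hX f) = b.2 :=
    csSup_eq_of_forall_le_of_forall_lt_exists_gt (dualValues_nonempty hX f)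
      (fun _ hd => le_of_mem_dualValues_of_mem_primalValues hd hbP)
      fun _ hq => exists_gt_mem_dualValues hX f fun c hc hcK => hq.trans_le (hbmin c hc hcK)
  exact ⟨hsup ▸ hbP, fun _ hp =>
    csSup_le (dualValues_nonempty hX f) fun _ hd => le_of_mem_dualValues_of_mem_primalValues hd hp⟩

/-- Dual representation of standard dual decomposition over a finite set:
the optimal value of the Lagrangian dual equals the minimum, over families of
probability weights on `X` sharing a common barycenter, of the corresponding
weighted sums of the `f i`. -/
theorem dd_dual_representation (n : ℕ) (N : ℕ) (hN : 1 ≤ N)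
    (X : Finset (EuclideanSpace ℝ (Fin n))) (hX : X.Nonempty)
    (f : Fin N → EuclideanSpace ℝ (Fin n) → ℝ) :
    IsLeast
      {d : ℝ | ∃ μ : Fin N → EuclideanSpace ℝ (Fin n) → ℝ,
        (∀ i, ∀ x ∈ X, 0 ≤ μ i x ∧ μ i x ≤ 1) ∧
        (∀ i, ∑ x ∈ X, μ i x = 1) ∧
        (∀ i j, ∑ x ∈ X, μ i x • x = ∑ x ∈ X, μ j x • x) ∧
        d = ∑ i, ∑ x ∈ X, μ i x * f i x}
      (sSup {d : ℝ | ∃ lam : Fin N → EuclideanSpace ℝ (Fin n),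
        ∑ i, lam i = 0 ∧
        d = ∑ i, X.inf' hX (fun x => f i x + (inner ℝ (lam i) x : ℝ))}) :=
  dd_dual_representation_general n N X hX f
end

section
/- Lower-semicontinuous hull of a piecewise constant function on a finite partition: Let T be a topological space, K ≥ 1, and let P_1,…,P_K ⊆ T be pairwise disjoint sets with union X := ⋃_{k=1}^K P_k. Let c_1,…,c_K ∈ ℝ and let g : T → ℝ satisfy g(x) = c_k whenever x ∈ P_k. Then for every x ∈ X, the liminf of g along 𝓝[X] x equals min { c_k : 1 ≤ k ≤ K, x ∈ closure(P_k) } (this indexing set is nonempty since x ∈ X). -/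
/-!
Near `x`, the within-filter `𝓝[⋃ k, P k] x` is the finite supremum of the filters `𝓝[P k] x`, and
those with `x ∉ closure (P k)` are trivial. So `g` eventually takes only the values `c k` with
`x ∈ closure (P k)`, and it takes each of them frequently; the liminf is therefore the least of them.
-/

open Filter Topology Set

theorem Filter.liminf_eq_of_eventually_ge_of_frequently_le {ι β : Type*}
    [ConditionallyCompleteLinearOrder β] {l : Filter ι} {u : ι → β} {m : β}
    (hge : ∀ᶠ i in l, m ≤ u i) (hle : ∃ᶠ i in l, u i ≤ m) :
    liminf u l = m :=
  le_antisymm (liminf_le_of_frequently_le hle ⟨m, hge⟩)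
    (le_liminf_of_le (IsCoboundedUnder.of_frequently_le hle) hge)

section Pieces

variable {T ι : Type*} [TopologicalSpace T] {P : ι → Set T} {x : T}

theorem eventually_mem_piece_of_mem_closure [Finite ι] :
    ∀ᶠ y in 𝓝[⋃ k, P k] x, ∃ k, x ∈ closure (P k) ∧ y ∈ P k := by
  rw [nhdsWithin_iUnion, eventually_iSup]
  intro k
  by_cases hk : x ∈ closure (P k)
  · filter_upwards [self_mem_nhdsWithin] with y hy using ⟨k, hk, hy⟩
  · simp [notMem_closure_iff_nhdsWithin_eq_bot.mp hk]

theorem frequently_mem_piece_of_mem_closure {k : ι} (hk : x ∈ closure (P k)) :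
    ∃ᶠ y in 𝓝[⋃ k, P k] x, y ∈ P k :=
  have : (𝓝[P k] x).NeBot := mem_closure_iff_nhdsWithin_neBot.mp hk
  (eventually_mem_nhdsWithin.frequently).filter_mono
    (nhdsWithin_mono x (subset_iUnion P k))

end Pieces

theorem lsc_piecewise_constant_general {T : Type*} [TopologicalSpace T]
    (K : ℕ) (P : Fin K → Set T)
    (c : Fin K → ℝ) (g : T → ℝ)
    (hg : ∀ k, ∀ x ∈ P k, g x = c k) :
    ∀ x ∈ ⋃ k, P k,
      IsLeast {r : ℝ | ∃ k, x ∈ closure (P k) ∧ c k = r}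
        (Filter.liminf g (nhdsWithin x (⋃ k, P k))) := by
  intro x hx
  set V := {r : ℝ | ∃ k, x ∈ closure (P k) ∧ c k = r}
  have hV_finite : V.Finite := (finite_range c).subset fun r ⟨k, _, hk⟩ => ⟨k, hk⟩
  have hV_nonempty : V.Nonempty := by
    obtain ⟨k, hk⟩ := mem_iUnion.mp hx
    exact ⟨c k, k, subset_closure hk, rfl⟩
  have hV_least : IsLeast V (sInf V) :=
    ⟨hV_nonempty.csInf_mem hV_finite, fun _ hr => csInf_le hV_finite.bddBelow hr⟩
  obtain ⟨k₀, hk₀, hck₀⟩ := hV_least.1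
  convert hV_least using 1
  apply liminf_eq_of_eventually_ge_of_frequently_le
  · filter_upwards [eventually_mem_piece_of_mem_closure] with y ⟨k, hk, hy⟩
    exact hg k y hy ▸ hV_least.2 ⟨k, hk, rfl⟩
  · refine (frequently_mem_piece_of_mem_closure hk₀).mono fun y hy => ?_
    rw [hg k₀ y hy, hck₀]

/-- The lower-semicontinuous hull of a piecewise constant function on a finite
partition: at any point of the union, the liminf within the union is the minimum
of the constants over the pieces whose closure contains the point. -/
theorem lsc_piecewise_constant {T : Type*} [TopologicalSpace T]
    (K : ℕ) (hK : 1 ≤ K) (P : Fin K → Set T)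
    (hdisj : ∀ k l, k ≠ l → Disjoint (P k) (P l))
    (c : Fin K → ℝ) (g : T → ℝ)
    (hg : ∀ k, ∀ x ∈ P k, g x = c k) :
    ∀ x ∈ ⋃ k, P k,
      IsLeast {r : ℝ | ∃ k, x ∈ closure (P k) ∧ c k = r}
        (Filter.liminf g (nhdsWithin x (⋃ k, P k))) :=
  lsc_piecewise_constant_general K P c g hg
end

section
/- Minimizing f plus a regularizer equals minimizing f plus its lower-semicontinuous hull: Let T be a topological space, X ⊆ T nonempty, f : T → ℝ continuous on X, and g : T → ℝ bounded below on X with f also bounded below on X. Define lsc(g)(x) := liminf of g along 𝓝[X] x for x ∈ X. Then inf_{x ∈ X} (f(x) + g(x)) = inf_{x ∈ X} (f(x) + lsc(g)(x)). -/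
open Filter Set Topology

/-!
Both infima have the same lower bounds. Since `lsc g ≤ g` on `X`, every lower bound of
`f + lsc g` bounds `f + g`. Conversely, if `b ≤ f + g` on `X`, then near `x ∈ X` within `X`
we have `g ≥ b - f`, and `b - f` tends to `b - f x` by continuity, so `lsc g x ≥ b - f x`.
-/

theorem csInf_eq_csInf_of_lowerBounds_eq {α : Type*} [ConditionallyCompleteLinearOrder α]
    {s t : Set α} (hne : s.Nonempty ↔ t.Nonempty) (h : lowerBounds s = lowerBounds t) :
    sInf s = sInf t := by
  rcases s.eq_empty_or_nonempty with rfl | hs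
  · rw [not_nonempty_iff_eq_empty.mp (mt hne.mpr not_nonempty_empty)]
  have hbdd : BddBelow s ↔ BddBelow t := by rw [BddBelow, BddBelow, h]
  by_cases hb : BddBelow s
  · exact (isGLB_csInf hs hb).unique ((isGLB_congr h).mpr (isGLB_csInf (hne.mp hs) (hbdd.mp hb)))
  · rw [csInf_of_not_bddBelow hb, csInf_of_not_bddBelow (hbdd.not.mp hb)]

section

variable {T : Type*} [TopologicalSpace T] {X : Set T} {x : T}

theorem isCoboundedUnder_ge_nhdsWithin_of_mem {β : Type*} [Preorder β] (g : T → β)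
    (hx : x ∈ X) : IsCoboundedUnder (· ≥ ·) (𝓝[X] x) g :=
  IsCobounded.mono (map_mono (pure_le_nhdsWithin hx)) ⟨g x, fun _ ha => ha⟩

theorem liminf_nhdsWithin_le_of_mem {β : Type*} [ConditionallyCompleteLinearOrder β]
    {g : T → β} (hx : x ∈ X) (hg : BddBelow (g '' X)) : liminf g (𝓝[X] x) ≤ g x :=
  liminf_le_of_le (hg.isBoundedUnder self_mem_nhdsWithin) fun _ hb => pure_le_nhdsWithin hx hb

theorem le_add_liminf_nhdsWithin_of_forall_le {f g : T → ℝ} {b : ℝ} (hx : x ∈ X)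
    (hf : ContinuousWithinAt f X x) (hb : ∀ y ∈ X, b ≤ f y + g y) :
    b ≤ f x + liminf g (𝓝[X] x) := by
  have : (𝓝[X] x).NeBot := mem_closure_iff_nhdsWithin_neBot.mp (subset_closure hx)
  have hlim : Tendsto (fun y => b - f y) (𝓝[X] x) (𝓝 (b - f x)) := tendsto_const_nhds.sub hf
  have hle : b - f x ≤ liminf g (𝓝[X] x) := by
    rw [← hlim.liminf_eq]
    exact liminf_le_liminf (eventually_nhdsWithin_of_forall fun y hy => by linarith [hb y hy])
      hlim.isBoundedUnder_ge (isCoboundedUnder_ge_nhdsWithin_of_mem g hx)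
  linarith

end

theorem inf_add_lsc_general {T : Type*} [TopologicalSpace T] (X : Set T)
    (f g : T → ℝ) (hf : ContinuousOn f X)
    (hgb : BddBelow (g '' X)) :
    sInf ((fun x => f x + g x) '' X)
      = sInf ((fun x => f x + Filter.liminf g (nhdsWithin x X)) '' X) := by
  refine csInf_eq_csInf_of_lowerBounds_eq (by simp only [image_nonempty]) ?_
  ext b
  simp only [mem_lowerBounds, forall_mem_image]
  refine ⟨fun hb x hx => le_add_liminf_nhdsWithin_of_forall_le hx (hf x hx) hb,
    fun hb x hx => (hb hx).trans ?_⟩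
  gcongr
  exact liminf_nhdsWithin_le_of_mem hx hgb

/-- Minimizing `f` plus a regularizer equals minimizing `f` plus the
lower-semicontinuous hull of the regularizer. -/
theorem inf_add_lsc {T : Type*} [TopologicalSpace T] (X : Set T) (hX : X.Nonempty)
    (f g : T → ℝ) (hf : ContinuousOn f X)
    (hgb : BddBelow (g '' X)) (hfb : BddBelow (f '' X)) :
    sInf ((fun x => f x + g x) '' X)
      = sInf ((fun x => f x + Filter.liminf g (nhdsWithin x X)) '' X) :=
  inf_add_lsc_general X f g hf hgb
end

section
/- Near-optimality of piecewise constant regularizers: Let X be a nonempty compact subset of ℝ^n, N ≥ 1, and let f_i : X → ℝ be Lipschitz continuous on X for i = 1,…,N; set v* := inf_{x∈X} ∑_{i=1}^N f_i(x) and g*_i(x) := (1/N)∑_{j=1}^N f_j(x) − f_i(x). Then for every ε > 0 there exists a map π : X → X with finite range such that, with the piecewise constant regularizers g_i := g*_i ∘ π (which satisfy ∑_{i=1}^N g_i(x) = 0 for all x ∈ X), one has ∑_{i=1}^N inf_{x ∈ X} (f_i(x) + g_i(x)) ≥ v* − ε. -/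
/-!
Snap every point of `X` to a nearby point of a finite `δ`-net `π x` inside `X`. For each `i`,
Lipschitz continuity gives `f i x + g*ᵢ (π x) ≥ f i (π x) + g*ᵢ (π x) - Kᵢ δ`, and
`f i + g*ᵢ` is the average `(1/N) ∑ⱼ fⱼ`, which is at least `v*/N` on `X`. Summing over `i`
loses only `(∑ᵢ Kᵢ) δ`, which is at most `ε` for small `δ`.
-/

open Set

theorem TotallyBounded.exists_mapsTo_finite_image_dist_lt {α : Type*} [PseudoMetricSpace α]
    {X : Set α} (hX : TotallyBounded X) {δ : ℝ} (hδ : 0 < δ) :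
    ∃ π : α → α, MapsTo π X X ∧ (π '' X).Finite ∧ ∀ x ∈ X, dist x (π x) < δ := by
  classical
  obtain ⟨t, htX, htfin, hcover⟩ := Metric.finite_approx_of_totallyBounded hX δ hδ
  have hnear : ∀ x ∈ X, ∃ y ∈ t, dist x y < δ := fun x hx => by
    simpa only [Set.mem_iUnion, Metric.mem_ball, exists_prop] using hcover hx
  let π : α → α := fun x => if hx : x ∈ X then (hnear x hx).choose else x
  have hπ : ∀ x (hx : x ∈ X), π x = (hnear x hx).choose := fun x hx => dif_pos hx
  have hπt : ∀ x ∈ X, π x ∈ t := fun x hx => hπ x hx ▸ (hnear x hx).choose_spec.1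
  refine ⟨π, fun x hx => htX (hπt x hx), htfin.subset ?_, fun x hx => ?_⟩
  · rintro _ ⟨x, hx, rfl⟩
    exact hπt x hx
  · exact hπ x hx ▸ (hnear x hx).choose_spec.2

theorem Finset.sum_mean_sub_eq_zero {ι : Type*} [Fintype ι] (a : ι → ℝ) :
    ∑ i, (1 / (Fintype.card ι : ℝ) * ∑ j, a j - a i) = 0 := by
  rcases isEmpty_or_nonempty ι with _ | _
  · simp
  · rw [Finset.sum_sub_distrib, Finset.sum_const, Finset.card_univ, nsmul_eq_mul,
      ← mul_assoc, mul_one_div_cancel (by positivity), one_mul, sub_self]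

theorem LipschitzOnWith.sub_mul_le_csInf_image_add_comp {α : Type*} [PseudoMetricSpace α]
    {X : Set α} {h g : α → ℝ} {π : α → α} {K : NNReal} {δ m : ℝ}
    (hh : LipschitzOnWith K h X) (hX : X.Nonempty) (hπ : MapsTo π X X)
    (hπδ : ∀ x ∈ X, dist x (π x) ≤ δ) (hm : ∀ y ∈ X, m ≤ h y + g y) :
    m - K * δ ≤ sInf ((fun x => h x + g (π x)) '' X) := by
  refine le_csInf (hX.image _) ?_
  rintro _ ⟨x, hx, rfl⟩
  have hlip : h (π x) - h x ≤ K * δ :=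
    calc h (π x) - h x ≤ dist (h x) (h (π x)) := by
          rw [Real.dist_eq, abs_sub_comm]; exact le_abs_self _
      _ ≤ K * dist x (π x) := hh.dist_le_mul x hx (π x) (hπ hx)
      _ ≤ K * δ := mul_le_mul_of_nonneg_left (hπδ x hx) K.coe_nonneg
  linarith [hm (π x) (hπ hx)]

/-- Near-optimality of piecewise constant regularizers. -/
theorem piecewise_constant_near_optimal (n : ℕ) (N : ℕ) (hN : 1 ≤ N)
    (X : Set (EuclideanSpace ℝ (Fin n))) (hXne : X.Nonempty) (hXc : IsCompact X)
    (f : Fin N → EuclideanSpace ℝ (Fin n) → ℝ)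
    (hf : ∀ i, ∃ K : NNReal, LipschitzOnWith K (f i) X)
    (gstar : Fin N → EuclideanSpace ℝ (Fin n) → ℝ)
    (hgstar : ∀ i x, gstar i x = (1 / (N : ℝ)) * ∑ j, f j x - f i x) :
    ∀ ε > (0 : ℝ), ∃ pr : EuclideanSpace ℝ (Fin n) → EuclideanSpace ℝ (Fin n),
      Set.MapsTo pr X X ∧ (pr '' X).Finite ∧
      (∀ x ∈ X, ∑ i, gstar i (pr x) = 0) ∧
      sInf ((fun x => ∑ i, f i x) '' X) - ε ≤
        ∑ i, sInf ((fun x => f i x + gstar i (pr x)) '' X) := by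
  intro ε hε
  choose K hK using hf
  set L : ℝ := ∑ i, (K i : ℝ)
  set δ : ℝ := ε / (L + 1)
  have hL : 0 ≤ L := by positivity
  obtain ⟨pr, hpr, hfin, hdist⟩ :=
    hXc.totallyBounded.exists_mapsTo_finite_image_dist_lt (div_pos hε (by positivity : 0 < L + 1))
  set v := sInf ((fun x => ∑ i, f i x) '' X)
  have hv : ∀ y ∈ X, v ≤ ∑ i, f i y := fun y hy =>
    csInf_le (hXc.bddBelow_image (continuousOn_finsetSum _ fun i _ => (hK i).continuousOn))
      (mem_image_of_mem _ hy)
  have hterm : ∀ i, 1 / (N : ℝ) * v - K i * δ ≤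
      sInf ((fun x => f i x + gstar i (pr x)) '' X) := fun i =>
    (hK i).sub_mul_le_csInf_image_add_comp hXne hpr (fun x hx => (hdist x hx).le) fun y hy => by
      rw [hgstar, add_sub_cancel]
      exact mul_le_mul_of_nonneg_left (hv y hy) (by positivity)
  have hLδ : L * δ ≤ ε := by
    rw [mul_div_left_comm]
    exact mul_le_of_le_one_right hε.le ((div_le_one (by positivity)).2 (by linarith))
  refine ⟨pr, hpr, hfin, fun x _ => ?_, ?_⟩
  · simpa only [hgstar, Fintype.card_fin] using Finset.sum_mean_sub_eq_zero fun j => f j (pr x)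
  calc v - ε ≤ v - L * δ := by linarith
    _ = ∑ i, (1 / (N : ℝ) * v - K i * δ) := by
      rw [Finset.sum_sub_distrib, Finset.sum_const, Finset.card_univ,
        Fintype.card_fin, nsmul_eq_mul, ← mul_assoc, mul_one_div_cancel (by positivity), one_mul, Finset.sum_mul]
    _ ≤ _ := Finset.sum_le_sum fun i _ => hterm i
end

section
/- Convergence of the GDD algorithm with Voronoi piecewise constant regularizers: Let X be a nonempty compact subset of a metric space, N ≥ 1, and let f_i : X → ℝ be Lipschitz continuous on X for i = 1,…,N; set v* := min_{x∈X} ∑_{i=1}^N f_i(x) and g*_i(x) := (1/N)∑_{j=1}^N f_j(x) − f_i(x). For each t ≥ 1 let X^t ⊆ X be a nonempty finite set with X^t ⊆ X^{t+1}, let π_t : X → X^t be a nearest-point map (π_t(x) ∈ X^t and dist(x, π_t(x)) ≤ dist(x, y) for all y ∈ X^t), define the regularizers g^t_i := g*_i ∘ π_t, and let x^i_t ∈ X minimize f_i + g^t_i over X; assume each solution is added to the point set, i.e., x^i_t ∈ X^{t+1} for all i and t. Then sup_{t≥1} ∑_{i=1}^N (f_i(x^i_t) + g^t_i(x^i_t))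 = v*. -/
/-!
Weak duality gives `∑ᵢ (fᵢ + gᵗᵢ)(xᵢₜ) ≤ v*` for every `t`, because the regularizers sum to zero.
Conversely, `fᵢ + g*ᵢ = F / N` with `F = ∑ⱼ fⱼ ≥ v*` on `X`, so by the Lipschitz bound the lower
bound falls short of `v*` by at most `∑ᵢ Kᵢ · dist (xᵢₜ, πₜ xᵢₜ)`. Since every earlier solution
`xᵢₛ` lies in `Xᵗ`, this distance is at most `dist (xᵢₜ, xᵢₛ)` for all `s < t`, and by compactness
of `X` it tends to zero: otherwise `(xᵢₜ)ₜ` would contain a uniformly separated subsequence.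
-/

open Filter Topology Finset

theorem sum_const_average {ι : Type*} [Fintype ι] (a : ι → ℝ) :
    ∑ _i : ι, (1 / (Fintype.card ι : ℝ)) * ∑ j, a j = ∑ j, a j := by
  rw [sum_const, card_univ, nsmul_eq_mul]
  rcases isEmpty_or_nonempty ι with _ | _
  · simp
  · field_simp

theorem ciSup_eq_of_tendsto_of_le {u : ℕ → ℝ} {l : ℝ} (hle : ∀ t, u t ≤ l)
    (hlim : Tendsto u atTop (𝓝 l)) : ⨆ t, u t = l :=
  le_antisymm (ciSup_le hle) <|
    le_of_tendsto' hlim fun t => le_ciSup ⟨l, by rintro _ ⟨s, rfl⟩; exact hle s⟩ t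

section Metric

variable {α : Type*} [PseudoMetricSpace α]

theorem IsCompact.eventually_exists_lt_dist_lt {X : Set α} (hX : IsCompact X) {z : ℕ → α}
    (hz : ∀ t, z t ∈ X) {δ : ℝ} (hδ : 0 < δ) :
    ∀ᶠ t in atTop, ∃ s < t, dist (z t) (z s) < δ := by
  by_contra h
  obtain ⟨φ, hφ, hsep⟩ := extraction_of_frequently_atTop (not_eventually.mp h)
  obtain ⟨_, -, ψ, hψ, hlim⟩ := hX.tendsto_subseq fun n => hz (φ n)
  obtain ⟨n, hn⟩ := Metric.cauchySeq_iff'.mp hlim.cauchySeq δ hδ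
  exact hsep (ψ (n + 1)) ⟨φ (ψ n), hφ (hψ n.lt_succ_self), hn (n + 1) n.le_succ⟩

theorem tendsto_dist_nearest_of_mem_succ {X : Set α} (hX : IsCompact X) {A : ℕ → Set α}
    (hA : Monotone A) {z p : ℕ → α} (hzX : ∀ t, z t ∈ X) (hzA : ∀ t, z t ∈ A (t + 1))
    (hp : ∀ t, ∀ y ∈ A t, dist (z t) (p t) ≤ dist (z t) y) :
    Tendsto (fun t => dist (z t) (p t)) atTop (𝓝 0) := by
  rw [Metric.tendsto_nhds]
  intro δ hδ
  filter_upwards [hX.eventually_exists_lt_dist_lt hzX hδ] with t ⟨s, hst, hs⟩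
  rw [Real.dist_0_eq_abs, abs_of_nonneg dist_nonneg]
  exact (hp t (z s) (hA hst (hzA s))).trans_lt hs

end Metric

section Regularizer

variable {α ι : Type*} [Fintype ι] {f g : ι → α → ℝ}

theorem sum_regularizer_eq_zero
    (hg : ∀ i x, g i x = (1 / (Fintype.card ι : ℝ)) * ∑ j, f j x - f i x) (x : α) :
    ∑ i, g i x = 0 := by
  simp only [hg, sum_sub_distrib, sum_const_average, sub_self]

theorem sum_add_le_of_sum_eq_zero {h : ι → α → ℝ} {x : ι → α} {y : α} (hsum : ∑ i, h i y = 0)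
    (hle : ∀ i, f i (x i) + h i (x i) ≤ f i y + h i y) :
    ∑ i, (f i (x i) + h i (x i)) ≤ ∑ i, f i y :=
  calc ∑ i, (f i (x i) + h i (x i)) ≤ ∑ i, (f i y + h i y) := sum_le_sum fun i _ => hle i
    _ = ∑ i, f i y := by rw [sum_add_distrib, hsum, add_zero]

theorem sub_sum_lipschitz_le_sum_add_regularizer [PseudoMetricSpace α] {X : Set α}
    {K : ι → NNReal} (hK : ∀ i, LipschitzOnWith (K i) (f i) X)
    (hg : ∀ i x, g i x = (1 / (Fintype.card ι : ℝ)) * ∑ j, f j x - f i x)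
    {x₀ : α} (hx₀ : ∀ y ∈ X, ∑ j, f j x₀ ≤ ∑ j, f j y)
    {x p : ι → α} (hx : ∀ i, x i ∈ X) (hp : ∀ i, p i ∈ X) :
    ∑ j, f j x₀ - ∑ i, K i * dist (x i) (p i) ≤ ∑ i, (f i (x i) + g i (p i)) := by
  have hterm : ∀ i, (1 / (Fintype.card ι : ℝ)) * ∑ j, f j x₀ - K i * dist (x i) (p i) ≤
      f i (x i) + g i (p i) := by
    intro i
    have hlip := (hK i).dist_le_mul (x i) (hx i) (p i) (hp i)
    rw [Real.dist_eq] at hlip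
    have hF := mul_le_mul_of_nonneg_left (hx₀ (p i) (hp i))
      (by positivity : (0 : ℝ) ≤ 1 / (Fintype.card ι : ℝ))
    rw [hg]
    linarith [(abs_le.mp hlip).1]
  calc ∑ j, f j x₀ - ∑ i, K i * dist (x i) (p i)
      = ∑ i, ((1 / (Fintype.card ι : ℝ)) * ∑ j, f j x₀ - K i * dist (x i) (p i)) := by
        rw [sum_sub_distrib, sum_const_average]
    _ ≤ ∑ i, (f i (x i) + g i (p i)) := sum_le_sum fun i _ => hterm i

end Regularizer

theorem gdd_voronoi_convergence_general {α : Type*} [MetricSpace α]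
    (X : Set α) (hXne : X.Nonempty) (hXc : IsCompact X)
    (N : ℕ) (f : Fin N → α → ℝ)
    (hf : ∀ i, ∃ K : NNReal, LipschitzOnWith K (f i) X)
    (gstar : Fin N → α → ℝ)
    (hgstar : ∀ i x, gstar i x = (1 / (N : ℝ)) * ∑ j, f j x - f i x)
    (Xt : ℕ → Set α)
    (hsubX : ∀ t, Xt t ⊆ X) (hmono : ∀ t, Xt t ⊆ Xt (t + 1))
    (pr : ℕ → α → α)
    (hpr : ∀ t, ∀ x ∈ X, pr t x ∈ Xt t ∧ ∀ y ∈ Xt t, dist x (pr t x) ≤ dist x y)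
    (xs : ℕ → Fin N → α) (hxs : ∀ t i, xs t i ∈ X)
    (hminz : ∀ t i, ∀ y ∈ X,
      f i (xs t i) + gstar i (pr t (xs t i)) ≤ f i y + gstar i (pr t y))
    (hadd : ∀ t i, xs t i ∈ Xt (t + 1)) :
    (⨆ t : ℕ, ∑ i, (f i (xs t i) + gstar i (pr t (xs t i)))) =
      sInf ((fun x => ∑ i, f i x) '' X) := by
  choose K hK using hf
  have hg : ∀ i x, gstar i x = (1 / (Fintype.card (Fin N) : ℝ)) * ∑ j, f j x - f i x := by
    simpa only [Fintype.card_fin] using hgstar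
  obtain ⟨x₀, hx₀X, hx₀⟩ : ∃ x₀ ∈ X, IsMinOn (fun x => ∑ i, f i x) X x₀ :=
    hXc.exists_isMinOn hXne <| continuousOn_finsetSum _ fun i _ => (hK i).continuousOn
  rw [IsLeast.csInf_eq
    ⟨Set.mem_image_of_mem _ hx₀X, Set.forall_mem_image.mpr fun _ hy => hx₀ hy⟩]
  have hupper : ∀ t, ∑ i, (f i (xs t i) + gstar i (pr t (xs t i))) ≤ ∑ i, f i x₀ := fun t =>
    sum_add_le_of_sum_eq_zero (h := fun i z => gstar i (pr t z)) (sum_regularizer_eq_zero hg _)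
      fun i => hminz t i x₀ hx₀X
  have hlower : ∀ t, ∑ i, f i x₀ - ∑ i, K i * dist (xs t i) (pr t (xs t i)) ≤
      ∑ i, (f i (xs t i) + gstar i (pr t (xs t i))) := fun t =>
    sub_sum_lipschitz_le_sum_add_regularizer hK hg (fun _ hy => hx₀ hy) (hxs t)
      fun i => hsubX t (hpr t _ (hxs t i)).1
  have hdist : ∀ i, Tendsto (fun t => dist (xs t i) (pr t (xs t i))) atTop (𝓝 0) := fun i =>
    tendsto_dist_nearest_of_mem_succ hXc (monotone_nat_of_le_succ hmono) (fun t => hxs t i)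
      (fun t => hadd t i) fun t => (hpr t _ (hxs t i)).2
  have hgap : Tendsto (fun t => ∑ i, f i x₀ - ∑ i, K i * dist (xs t i) (pr t (xs t i)))
      atTop (𝓝 (∑ i, f i x₀)) := by
    simpa using tendsto_const_nhds.sub (tendsto_finsetSum _ fun i _ => (hdist i).const_mul _)
  exact ciSup_eq_of_tendsto_of_le hupper
    (tendsto_of_tendsto_of_tendsto_of_le_of_le hgap tendsto_const_nhds hlower hupper)

/-- Convergence of the GDD algorithm with Voronoi piecewise constant regularizers. -/
theorem gdd_voronoi_convergence {α : Type*} [MetricSpace α]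
    (X : Set α) (hXne : X.Nonempty) (hXc : IsCompact X)
    (N : ℕ) (hN : 1 ≤ N) (f : Fin N → α → ℝ)
    (hf : ∀ i, ∃ K : NNReal, LipschitzOnWith K (f i) X)
    (gstar : Fin N → α → ℝ)
    (hgstar : ∀ i x, gstar i x = (1 / (N : ℝ)) * ∑ j, f j x - f i x)
    (Xt : ℕ → Set α) (hfin : ∀ t, (Xt t).Finite) (hne : ∀ t, (Xt t).Nonempty)
    (hsubX : ∀ t, Xt t ⊆ X) (hmono : ∀ t, Xt t ⊆ Xt (t + 1))
    (pr : ℕ → α → α)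
    (hpr : ∀ t, ∀ x ∈ X, pr t x ∈ Xt t ∧ ∀ y ∈ Xt t, dist x (pr t x) ≤ dist x y)
    (xs : ℕ → Fin N → α) (hxs : ∀ t i, xs t i ∈ X)
    (hminz : ∀ t i, ∀ y ∈ X,
      f i (xs t i) + gstar i (pr t (xs t i)) ≤ f i y + gstar i (pr t y))
    (hadd : ∀ t i, xs t i ∈ Xt (t + 1)) :
    (⨆ t : ℕ, ∑ i, (f i (xs t i) + gstar i (pr t (xs t i)))) =
      sInf ((fun x => ∑ i, f i x) '' X) :=
  gdd_voronoi_convergence_general X hXne hXc N f hf gstar hgstar Xt hsubX hmono pr hpr xs hxs hminz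
    hadd
end

section
/- Convergence of the GDD algorithm with valid, tight, uniformly Lipschitz cuts: Let X be a nonempty compact subset of a metric space, N ≥ 1, and let f_i : X → ℝ be Lipschitz continuous on X for i = 1,…,N; set v* := min_{x∈X} ∑_{i=1}^N f_i(x) and g*_i(x) := (1/N)∑_{j=1}^N f_j(x) − f_i(x). Let L ≥ 0 and for each i let ℒ_i : X × X → ℝ be a cut family satisfying: (validity) ℒ_i(x̂, x) ≤ g*_i(x) for all x̂, x ∈ X; (tightness) ℒ_i(x̂, x̂) = g*_i(x̂) for all x̂ ∈ X; (uniform Lipschitz continuity) |ℒ_i(x̂, x) − ℒ_i(x̂, y)| ≤ L·dist(x, y) for all x̂, x, y ∈ X. For each t ≥ 1 let X^t ⊆ X be a nonempty finite set with X^t ⊆ X^{t+1}, define g^t_i(x) := max_{x̂ ∈ X^t} ℒ_i(x̂, x), and let x^i_t ∈ X minimize f_i + g^t_i over X; assume x^i_t ∈ X^{t+1} for all i and t. Then sup_{t≥1} ∑_{i=1}^N (f_i(x^i_t) + g^t_i(x^i_t)) = v*. -/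
/-!
The sums `∑ᵢ (fᵢ + gᵢᵗ)(xᵢᵗ)` never exceed `v*`, because every regularizer `gᵢᵗ` lies below
`gᵢ*` and `∑ᵢ (fᵢ + gᵢ*) = ∑ᵢ fᵢ`. Conversely, `fᵢ + gᵢ* = (1/N) ∑ⱼ fⱼ`, so the sum falls short
of `v*` by at most the total gap `∑ᵢ (gᵢ* - gᵢᵗ)(xᵢᵗ)`. For `s < t` the iterate `xᵢˢ` already
anchors a cut at step `t`; tightness and the uniform Lipschitz bound make that gap at most
`∑ᵢ (gᵢ*(xᵢᵗ) - gᵢ*(xᵢˢ) + L·dist(xᵢˢ, xᵢᵗ))`, which compactness of `Xᴺ` makes arbitrarily small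
for suitable `s < t`.
-/

open Finset Filter Topology Function

theorem IsCompact.exists_lt_apply_lt {β : Type*} [TopologicalSpace β] [FirstCountableTopology β]
    {K : Set β} (hK : IsCompact K) {u : ℕ → β} (hu : ∀ n, u n ∈ K) {Φ : β → β → ℝ}
    (hΦ : ContinuousOn (uncurry Φ) (K ×ˢ K)) (hdiag : ∀ x ∈ K, Φ x x ≤ 0) {ε : ℝ} (hε : 0 < ε) :
    ∃ s t, s < t ∧ Φ (u s) (u t) < ε := by
  obtain ⟨a, ha, φ, hφ, hlim⟩ := hK.tendsto_subseq hu
  have hpairs : Tendsto (fun k => (u (φ k), u (φ (k + 1)))) atTop (𝓝[K ×ˢ K] (a, a)) :=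
    tendsto_nhdsWithin_of_tendsto_nhds_of_eventually_within _
      (hlim.prodMk_nhds (hlim.comp (tendsto_add_atTop_nat 1)))
      (Eventually.of_forall fun k => ⟨hu _, hu _⟩)
  have hsmall : ∀ᶠ k in atTop, Φ (u (φ k)) (u (φ (k + 1))) < ε :=
    (hΦ (a, a) ⟨ha, ha⟩).tendsto.comp hpairs |>.eventually
      (gt_mem_nhds ((hdiag a ha).trans_lt hε))
  obtain ⟨k, hk⟩ := hsmall.exists
  exact ⟨φ k, φ (k + 1), hφ k.lt_succ_self, hk⟩

noncomputable def cutRegularizer {α : Type*} (cut : α → α → ℝ) (S : Set α) (x : α) : ℝ :=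
  sSup ((fun xhat => cut xhat x) '' S)

section cutRegularizer

variable {α : Type*} {cut : α → α → ℝ} {S : Set α}

theorem cutRegularizer_le (hS : S.Nonempty) {x : α} {c : ℝ} (h : ∀ xhat ∈ S, cut xhat x ≤ c) :
    cutRegularizer cut S x ≤ c :=
  csSup_le (hS.image _) (Set.forall_mem_image.2 h)

theorem le_cutRegularizer (hS : S.Finite) {xhat : α} (hxhat : xhat ∈ S) (x : α) :
    cut xhat x ≤ cutRegularizer cut S x :=
  le_csSup (hS.image _).bddAbove ⟨xhat, hxhat, rfl⟩

theorem sub_mul_dist_le_cutRegularizer [PseudoMetricSpace α] (hS : S.Finite) {xhat : α}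
    (hxhat : xhat ∈ S) {x : α} {L : ℝ} (hlip : |cut xhat xhat - cut xhat x| ≤ L * dist xhat x) :
    cut xhat xhat - L * dist xhat x ≤ cutRegularizer cut S x := by
  have := le_cutRegularizer (cut := cut) hS hxhat x
  linarith [(abs_le.1 hlip).2]

end cutRegularizer

section gapBound

variable {α ι : Type*} [PseudoMetricSpace α] [Fintype ι]

noncomputable def gapBound (gstar : ι → α → ℝ) (L : ℝ) (y z : ι → α) : ℝ :=
  ∑ i, (gstar i (z i) - gstar i (y i) + L * dist (y i) (z i))

theorem continuousOn_gapBound {X : Set α} {gstar : ι → α → ℝ}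
    (hcont : ∀ i, ContinuousOn (gstar i) X) (L : ℝ) :
    ContinuousOn (uncurry (gapBound gstar L))
      ((Set.univ.pi fun _ => X) ×ˢ (Set.univ.pi fun _ => X)) := by
  have hcoord : ∀ i, ContinuousOn (fun p : (ι → α) × (ι → α) => gstar i (p.2 i) - gstar i (p.1 i))
      ((Set.univ.pi fun _ => X) ×ˢ (Set.univ.pi fun _ => X)) := fun i =>
    ((hcont i).comp (by fun_prop) fun p hp => hp.2 i (Set.mem_univ i)).sub
      ((hcont i).comp (by fun_prop) fun p hp => hp.1 i (Set.mem_univ i))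
  exact continuousOn_finsetSum _ fun i _ => (hcoord i).add (by fun_prop)

theorem gapBound_self (gstar : ι → α → ℝ) (L : ℝ) (y : ι → α) : gapBound gstar L y y = 0 := by
  simp [gapBound]

end gapBound

theorem gdd_cuts_convergence_general {α : Type*} [MetricSpace α]
    (X : Set α) (hXne : X.Nonempty) (hXc : IsCompact X)
    (N : ℕ) (hN : 1 ≤ N) (f : Fin N → α → ℝ)
    (hf : ∀ i, ∃ K : NNReal, LipschitzOnWith K (f i) X)
    (gstar : Fin N → α → ℝ)
    (hgstar : ∀ i x, gstar i x = (1 / (N : ℝ)) * ∑ j, f j x - f i x)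
    (L : ℝ)
    (cut : Fin N → α → α → ℝ)
    (hvalid : ∀ i, ∀ xhat ∈ X, ∀ x ∈ X, cut i xhat x ≤ gstar i x)
    (htight : ∀ i, ∀ xhat ∈ X, cut i xhat xhat = gstar i xhat)
    (hlip : ∀ i, ∀ xhat ∈ X, ∀ x ∈ X, ∀ y ∈ X,
      |cut i xhat x - cut i xhat y| ≤ L * dist x y)
    (Xt : ℕ → Set α) (hfin : ∀ t, (Xt t).Finite) (hne : ∀ t, (Xt t).Nonempty)
    (hsubX : ∀ t, Xt t ⊆ X) (hmono : ∀ t, Xt t ⊆ Xt (t + 1))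
    (g : ℕ → Fin N → α → ℝ)
    (hg : ∀ t i x, g t i x = sSup ((fun xhat => cut i xhat x) '' Xt t))
    (xs : ℕ → Fin N → α) (hxs : ∀ t i, xs t i ∈ X)
    (hminz : ∀ t i, ∀ y ∈ X, f i (xs t i) + g t i (xs t i) ≤ f i y + g t i y)
    (hadd : ∀ t i, xs t i ∈ Xt (t + 1)) :
    (⨆ t : ℕ, ∑ i, (f i (xs t i) + g t i (xs t i))) =
      sInf ((fun x => ∑ i, f i x) '' X) := by
  set F : α → ℝ := fun x => ∑ i, f i x
  have hfc : ∀ i, ContinuousOn (f i) X := fun i => (hf i).choose_spec.continuousOn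
  have hFc : ContinuousOn F X := continuousOn_finsetSum _ fun i _ => hfc i
  have hgstar_cont : ∀ i, ContinuousOn (gstar i) X := fun i =>
    ((continuousOn_const.mul hFc).sub (hfc i)).congr fun x _ => hgstar i x
  have hconsensus : ∀ i x, f i x + gstar i x = F x / N := fun i x => by
    rw [hgstar]; ring
  have hreg : ∀ t i x, g t i x = cutRegularizer (cut i) (Xt t) x := hg
  obtain ⟨x₀, hx₀, hmin⟩ := hXc.exists_isMinOn hXne hFc
  have hsum_const : ∑ _i : Fin N, F x₀ / N = F x₀ := by
    rw [sum_const, card_univ, Fintype.card_fin, nsmul_eq_mul]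
    field_simp [show (N : ℝ) ≠ 0 by positivity]
  have hupper : ∀ t, ∑ i, (f i (xs t i) + g t i (xs t i)) ≤ F x₀ := fun t => by
    rw [← hsum_const]
    refine sum_le_sum fun i _ => (hminz t i x₀ hx₀).trans ?_
    rw [← hconsensus, hreg]
    gcongr
    exact cutRegularizer_le (hne t) fun xhat hxhat => hvalid i xhat (hsubX t hxhat) x₀ hx₀
  have hlower : ∀ s t, s < t →
      F x₀ - gapBound gstar L (xs s) (xs t) ≤ ∑ i, (f i (xs t i) + g t i (xs t i)) := by
    intro s t hst
    rw [← hsum_const, gapBound, ← sum_sub_distrib]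
    refine sum_le_sum fun i _ => ?_
    have hanchor : xs s i ∈ Xt t := monotone_nat_of_le_succ hmono hst (hadd s i)
    have hcut := sub_mul_dist_le_cutRegularizer (hfin t) hanchor
      (hlip i _ (hxs s i) _ (hxs s i) _ (hxs t i))
    have hobj : F x₀ / N ≤ F (xs t i) / N := by gcongr; exact hmin (hxs t i)
    rw [htight i _ (hxs s i), ← hreg] at hcut
    linarith [hconsensus i (xs t i)]
  rw [IsLeast.csInf_eq ⟨Set.mem_image_of_mem F hx₀, Set.forall_mem_image.2 fun y hy => hmin hy⟩]
  refine ciSup_eq_of_forall_le_of_forall_lt_exists_gt hupper fun w hw => ?_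
  obtain ⟨s, t, hst, hgap⟩ := (isCompact_univ_pi fun _ => hXc).exists_lt_apply_lt
    (fun t => Set.mem_univ_pi.2 (hxs t)) (continuousOn_gapBound hgstar_cont L)
    (fun y _ => (gapBound_self gstar L y).le) (sub_pos.2 hw)
  exact ⟨t, by linarith [hlower s t hst]⟩

/-- Convergence of the GDD algorithm with valid, tight, uniformly Lipschitz cuts. -/
theorem gdd_cuts_convergence {α : Type*} [MetricSpace α]
    (X : Set α) (hXne : X.Nonempty) (hXc : IsCompact X)
    (N : ℕ) (hN : 1 ≤ N) (f : Fin N → α → ℝ)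
    (hf : ∀ i, ∃ K : NNReal, LipschitzOnWith K (f i) X)
    (gstar : Fin N → α → ℝ)
    (hgstar : ∀ i x, gstar i x = (1 / (N : ℝ)) * ∑ j, f j x - f i x)
    (L : ℝ) (hL : 0 ≤ L)
    (cut : Fin N → α → α → ℝ)
    (hvalid : ∀ i, ∀ xhat ∈ X, ∀ x ∈ X, cut i xhat x ≤ gstar i x)
    (htight : ∀ i, ∀ xhat ∈ X, cut i xhat xhat = gstar i xhat)
    (hlip : ∀ i, ∀ xhat ∈ X, ∀ x ∈ X, ∀ y ∈ X,
      |cut i xhat x - cut i xhat y| ≤ L * dist x y)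
    (Xt : ℕ → Set α) (hfin : ∀ t, (Xt t).Finite) (hne : ∀ t, (Xt t).Nonempty)
    (hsubX : ∀ t, Xt t ⊆ X) (hmono : ∀ t, Xt t ⊆ Xt (t + 1))
    (g : ℕ → Fin N → α → ℝ)
    (hg : ∀ t i x, g t i x = sSup ((fun xhat => cut i xhat x) '' Xt t))
    (xs : ℕ → Fin N → α) (hxs : ∀ t i, xs t i ∈ X)
    (hminz : ∀ t i, ∀ y ∈ X, f i (xs t i) + g t i (xs t i) ≤ f i y + g t i y)
    (hadd : ∀ t i, xs t i ∈ Xt (t + 1)) :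
    (⨆ t : ℕ, ∑ i, (f i (xs t i) + g t i (xs t i))) =
      sInf ((fun x => ∑ i, f i x) '' X) :=
  gdd_cuts_convergence_general X hXne hXc N hN f hf gstar hgstar L cut hvalid htight hlip Xt hfin
    hne hsubX hmono g hg xs hxs hminz hadd
end

section
/- Strong duality for GDD with constraints: Let N ≥ 1, let X_1,…,X_N be nonempty subsets of a set α whose intersection ⋂_{i=1}^N X_i is nonempty, and let f : α → ℝ satisfy 0 ≤ f(x) for all x ∈ ⋃_{i=1}^N X_i and f bounded above on ⋃_{i=1}^N X_i. Consider the set D of all values (1/N) ∑_{i=1}^N inf_{x ∈ X_i} (f(x) + g_i(x)), taken over all families g_i : α → ℝ, i = 1,…,N, such that ∑_{i=1}^N g_i(x) = 0 for all x ∈ ⋃_{i=1}^N X_i and each set {f(x) + g_i(x) : x ∈ X_i} is bounded below. Then u* := inf { f(x) : x ∈ ⋂_{i=1}^N X_i } is the greatest element of D, i.e., u* ∈ D and d ≤ u* for all d ∈ D. -/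
/-!
Weak duality: at a feasible point `x` the regularizers cancel, so the `N` infima sum to at most
`N * f x`. Strong duality: choose for every point `x` outside `⋂ i, X i` an index `j x` with
`x ∉ X (j x)`, and let every other `g i` lower `f x` to the primal value `u`, with `g (j x)`
absorbing the excess so that the regularizers still sum to zero. Then `f + g i` equals `f` on the
intersection and `u` elsewhere on `X i`, so each of its infima over `X i` is exactly `u`.
-/

open Finset

section

variable {ι α : Type*}

theorem exists_forall_notMem_of_notMem_iInter [Nonempty ι] (X : ι → Set α) :
    ∃ j : α → ι, ∀ x, x ∉ ⋂ i, X i → x ∉ X (j x) := by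
  have (x : α) : ∃ k, x ∉ ⋂ i, X i → x ∉ X k := by
    by_cases hx : x ∈ ⋂ i, X i
    · exact ⟨Classical.arbitrary ι, fun h => (h hx).elim⟩
    · obtain ⟨k, hk⟩ : ∃ k, x ∉ X k := by simpa [Set.mem_iInter] using hx
      exact ⟨k, fun _ => hk⟩
  exact Classical.axiomOfChoice this

variable [Fintype ι]

theorem sum_sInf_image_add_le_card_mul {X : ι → Set α} {f : α → ℝ} {g : ι → α → ℝ}
    (hbdd : ∀ i, BddBelow ((fun y => f y + g i y) '' X i)) {x : α} (hx : x ∈ ⋂ i, X i)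
    (hsum : ∑ i, g i x = 0) :
    ∑ i, sInf ((fun y => f y + g i y) '' X i) ≤ Fintype.card ι * f x :=
  calc ∑ i, sInf ((fun y => f y + g i y) '' X i)
      ≤ ∑ i, (f x + g i x) :=
        sum_le_sum fun i _ => csInf_le (hbdd i) ⟨x, Set.mem_iInter.mp hx i, rfl⟩
    _ = Fintype.card ι * f x := by
        rw [sum_add_distrib, hsum, add_zero, sum_const, card_univ, nsmul_eq_mul]

open Classical in
noncomputable def balancingRegularizer (X : ι → Set α) (f : α → ℝ) (j : α → ι) (c : ℝ)
    (i : ι) (x : α) : ℝ :=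
  if x ∈ ⋂ k, X k then 0 else if i = j x then (Fintype.card ι - 1) * (f x - c) else c - f x

variable {X : ι → Set α} {f : α → ℝ} {j : α → ι} {c : ℝ}

theorem sum_balancingRegularizer (x : α) : ∑ i, balancingRegularizer X f j c i x = 0 := by
  classical
  by_cases hx : x ∈ ⋂ k, X k
  · simp [balancingRegularizer, hx]
  · have (i : ι) : balancingRegularizer X f j c i x =
        (c - f x) + if i = j x then Fintype.card ι * (f x - c) else 0 := by
      unfold balancingRegularizer
      split_ifs <;> ring
    simp only [this, sum_add_distrib, sum_ite_eq', mem_univ, if_true, sum_const, card_univ,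
      nsmul_eq_mul]
    ring

theorem balancingRegularizer_of_mem_iInter {x : α} (hx : x ∈ ⋂ k, X k) (i : ι) :
    balancingRegularizer X f j c i x = 0 := by
  simp [balancingRegularizer, hx]

theorem add_balancingRegularizer_of_notMem_iInter (hj : ∀ x, x ∉ ⋂ k, X k → x ∉ X (j x))
    {i : ι} {x : α} (hxi : x ∈ X i) (hx : x ∉ ⋂ k, X k) :
    f x + balancingRegularizer X f j c i x = c := by
  have hi : i ≠ j x := fun h => hj x hx (h ▸ hxi)
  simp only [balancingRegularizer, hx, hi, if_false]
  ring

theorem isGLB_image_add_balancingRegularizer (hj : ∀ x, x ∉ ⋂ k, X k → x ∉ X (j x))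
    (hc : IsGLB (f '' ⋂ k, X k) c) (i : ι) :
    IsGLB ((fun x => f x + balancingRegularizer X f j c i x) '' X i) c := by
  have on_iInter {x : α} (hx : x ∈ ⋂ k, X k) : f x + balancingRegularizer X f j c i x = f x := by
    rw [balancingRegularizer_of_mem_iInter hx, add_zero]
  constructor
  · rintro _ ⟨x, hxi, rfl⟩
    dsimp only
    by_cases hx : x ∈ ⋂ k, X k
    · rw [on_iInter hx]
      exact hc.1 ⟨x, hx, rfl⟩
    · rw [add_balancingRegularizer_of_notMem_iInter hj hxi hx]
  · refine fun b hb => hc.2 ?_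
    rintro _ ⟨x, hx, rfl⟩
    rw [← on_iInter hx]
    exact hb ⟨x, Set.mem_iInter.mp hx i, rfl⟩

end

theorem cgdd_strong_duality_general {α : Type*} (N : ℕ) (hN : 1 ≤ N)
    (Xs : Fin N → Set α)
    (hint : (⋂ i, Xs i).Nonempty)
    (f : α → ℝ)
    (hf0 : ∀ x ∈ ⋃ i, Xs i, 0 ≤ f x) :
    IsGreatest
      {d : ℝ | ∃ g : Fin N → α → ℝ,
        (∀ x ∈ ⋃ i, Xs i, ∑ i, g i x = 0) ∧
        (∀ i, BddBelow ((fun x => f x + g i x) '' Xs i)) ∧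
        d = (1 / (N : ℝ)) * ∑ i, sInf ((fun x => f x + g i x) '' Xs i)}
      (sInf (f '' ⋂ i, Xs i)) := by
  have : Nonempty (Fin N) := ⟨⟨0, hN⟩⟩
  have hNpos : (0 : ℝ) < N := by exact_mod_cast hN
  have hglb : IsGLB (f '' ⋂ i, Xs i) (sInf (f '' ⋂ i, Xs i)) :=
    isGLB_csInf (hint.image f) ⟨0, by
      rintro _ ⟨x, hx, rfl⟩
      exact hf0 x (Set.iInter_subset_iUnion hx)⟩
  obtain ⟨j, hj⟩ := exists_forall_notMem_of_notMem_iInter Xs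
  have hdual := isGLB_image_add_balancingRegularizer (f := f) hj hglb
  refine ⟨⟨balancingRegularizer Xs f j _, fun x _ => sum_balancingRegularizer x,
    fun i => (hdual i).bddBelow, ?_⟩, ?_⟩
  · have hne (i : Fin N) : (Xs i).Nonempty := hint.mono (Set.iInter_subset Xs i)
    simp only [fun i => (hdual i).csInf_eq ((hne i).image _), sum_const, card_univ,
      Fintype.card_fin, nsmul_eq_mul]
    field_simp
  · rintro _ ⟨g, hsum, hbdd, rfl⟩
    refine le_csInf (hint.image f) ?_
    rintro _ ⟨x, hx, rfl⟩
    have hweak := sum_sInf_image_add_le_card_mul hbdd hx (hsum x (Set.iInter_subset_iUnion hx))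
    rw [Fintype.card_fin] at hweak
    rwa [one_div, inv_mul_le_iff₀ hNpos]

/-- Strong duality for GDD with constraints: the constrained primal value is the
greatest element of the set of constrained-GDD dual bounds. -/
theorem cgdd_strong_duality {α : Type*} (N : ℕ) (hN : 1 ≤ N)
    (Xs : Fin N → Set α) (hXsNe : ∀ i, (Xs i).Nonempty)
    (hint : (⋂ i, Xs i).Nonempty)
    (f : α → ℝ)
    (hf0 : ∀ x ∈ ⋃ i, Xs i, 0 ≤ f x)
    (hfb : BddAbove (f '' ⋃ i, Xs i)) :
    IsGreatest
      {d : ℝ | ∃ g : Fin N → α → ℝ,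
        (∀ x ∈ ⋃ i, Xs i, ∑ i, g i x = 0) ∧
        (∀ i, BddBelow ((fun x => f x + g i x) '' Xs i)) ∧
        d = (1 / (N : ℝ)) * ∑ i, sInf ((fun x => f x + g i x) '' Xs i)}
      (sInf (f '' ⋂ i, Xs i)) :=
  cgdd_strong_duality_general N hN Xs hint f hf0
end

section
/- Convex envelope of a piecewise constant function on polyhedral pieces: Let n ≥ 1, K ≥ 1, and for each k = 1,…,K let A_k be a real m_k × n matrix, b_k ∈ ℝ^{m_k}, and g_k ∈ ℝ. Suppose each polyhedron Q_k := { y ∈ ℝ^n : A_k y ≤ b_k } (componentwise inequality) is nonempty and bounded. Define the set G := ⋃_{k=1}^K { (y, θ) ∈ ℝ^n × ℝ : A_k y ≤ b_k and θ ≥ g_k }, and define E := { (α, β) ∈ ℝ × ℝ^n : for each k = 1,…,K there exists η_k ∈ ℝ^{m_k} with η_k ≥ 0, α + b_kᵀ η_k ≤ g_k, and A_kᵀ η_k = β }. Then for every x in the convex hull of ⋃_{k=1}^K Q_k, inf { θ : (x, θ) ∈ conv(G) } = sup { α + βᵀx : (α, β) ∈ E }. -/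
/-!
The envelope value at `x` is at least every affine minorant `α + βᵀx` of the pieces, since the
half-space above an affine minorant is convex and contains `G`. Conversely, `conv G` is the sum
of the compact set `conv (⋃ Q_k × {g_k})` and the closed ray `{0} × [0, ∞)`, hence closed; so a
point `(x, θ₀)` below the envelope can be strictly separated from `conv G`, and as `(x, θ)` lies in
`conv G` for large `θ`, the separating hyperplane is non-vertical and yields an affine minorant
exceeding `θ₀` at `x`. Finally, by the affine Farkas lemma an affine function `α + βᵀy` is bounded
by `g_k` on the nonempty polyhedron `Q_k` exactly when some `η_k ≥ 0` certifies it, so the affine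
minorants are exactly the elements of `E`; Farkas' lemma in turn rests on finitely generated cones
being closed, which follows from Carathéodory's theorem for cones.
-/

open Set Matrix

section ConicHull

variable {ι E : Type*} [AddCommGroup E] [Module ℝ E]

def conicHullOn (v : ι → E) (s : Finset ι) : Set E :=
  {x | ∃ μ : ι → ℝ, 0 ≤ μ ∧ ∑ i ∈ s, μ i • v i = x}

variable {v : ι → E} {s t : Finset ι} {x : E}

lemma zero_mem_conicHullOn : (0 : E) ∈ conicHullOn v s :=
  ⟨0, le_rfl, by simp⟩

lemma mem_conicHullOn_self [DecidableEq ι] {i : ι} (hi : i ∈ s) : v i ∈ conicHullOn v s :=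
  ⟨Pi.single i 1, by simp [Pi.single_nonneg], by simp [Pi.single_apply, hi]⟩

lemma smul_mem_conicHullOn {r : ℝ} (hr : 0 ≤ r) (hx : x ∈ conicHullOn v s) :
    r • x ∈ conicHullOn v s := by
  obtain ⟨μ, hμ, rfl⟩ := hx
  exact ⟨r • μ, smul_nonneg hr hμ, by simp [Finset.smul_sum, smul_smul]⟩

lemma convex_conicHullOn : Convex ℝ (conicHullOn v s) := by
  rintro _ ⟨μ, hμ, rfl⟩ _ ⟨ν, hν, rfl⟩ a c ha hc -
  exact ⟨a • μ + c • ν, add_nonneg (smul_nonneg ha hμ) (smul_nonneg hc hν), by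
    simp [Finset.smul_sum, add_smul, smul_smul, Finset.sum_add_distrib]⟩

lemma conicHullOn_mono [DecidableEq ι] (hst : s ⊆ t) : conicHullOn v s ⊆ conicHullOn v t := by
  rintro _ ⟨μ, hμ, rfl⟩
  refine ⟨fun i => if i ∈ s then μ i else 0, fun i => ?_, ?_⟩
  · dsimp only
    split_ifs
    exacts [hμ i, le_rfl]
  rw [← Finset.sum_subset hst fun i _ hi => by simp [hi]]
  exact Finset.sum_congr rfl fun i hi => by simp [hi]

lemma nonneg_of_forall_lt_of_mem_conicHullOn (f : E →ₗ[ℝ] ℝ) {u : ℝ}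
    (hu : ∀ y ∈ conicHullOn v s, u < f y) (hx : x ∈ conicHullOn v s) : 0 ≤ f x := by
  have hu₀ : u < 0 := by simpa using hu 0 zero_mem_conicHullOn
  by_contra! hfx
  have := hu _ (smul_mem_conicHullOn (div_nonneg_of_nonpos hu₀.le hfx.le) hx)
  rw [map_smul, smul_eq_mul, div_mul_cancel₀ _ hfx.ne] at this
  exact this.false

/-- Moving along a linear dependence until a first coefficient vanishes. -/
lemma exists_mem_conicHullOn_erase [DecidableEq ι] (hs : ¬LinearIndepOn ℝ v (s : Set ι))
    (hx : x ∈ conicHullOn v s) : ∃ j ∈ s, x ∈ conicHullOn v (s.erase j) := by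
  obtain ⟨μ, hμ, rfl⟩ := hx
  obtain ⟨c, hcs, hc, i₀, hi₀, hci₀⟩ :
      ∃ c : ι → ℝ, (∀ i ∉ s, c i = 0) ∧ ∑ i ∈ s, c i • v i = 0 ∧ ∃ i ∈ s, c i ≠ 0 := by
    obtain ⟨c, hc, i₀, hi₀, hci₀⟩ := not_linearIndepOn_finset_iff.mp hs
    refine ⟨(s : Set ι).indicator c, fun i hi => indicator_of_notMem (by simpa) _, ?_,
      i₀, hi₀, by simpa [hi₀]⟩
    rw [← hc]
    exact Finset.sum_congr rfl fun i hi => by simp [hi]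
  wlog hpos : 0 < c i₀ generalizing c
  · exact this (-c) (by simpa using hcs) (by simp [hc]) (by simpa using hci₀)
      (by simpa using lt_of_le_of_ne (not_lt.mp hpos) hci₀)
  obtain ⟨j, hj, hmin⟩ := (s.filter (0 < c ·)).exists_min_image (fun i => μ i / c i)
    ⟨i₀, by simp [hi₀, hpos]⟩
  rw [Finset.mem_filter] at hj
  set r := μ j / c j
  have hr : 0 ≤ r := div_nonneg (hμ j) hj.2.le
  have hμ' : 0 ≤ μ - r • c := fun i => by
    have hμi : 0 ≤ μ i := hμ i
    simp only [Pi.sub_apply, Pi.smul_apply, smul_eq_mul, Pi.zero_apply]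
    by_cases hi : i ∈ s ∧ 0 < c i
    · linarith [(le_div_iff₀ hi.2).mp (hmin i (Finset.mem_filter.mpr hi))]
    · have hci : c i ≤ 0 := by
        by_cases his : i ∈ s
        · exact not_lt.mp fun h => hi ⟨his, h⟩
        · exact (hcs i his).le
      nlinarith
  refine ⟨j, hj.1, μ - r • c, hμ', ?_⟩
  have hj₀ : (μ - r • c) j = 0 := by simp [r, div_mul_cancel₀ _ hj.2.ne']
  rw [Finset.sum_erase _ (by simp [hj₀])]
  simp [sub_smul, Finset.sum_sub_distrib, mul_smul, ← Finset.smul_sum, hc]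

lemma exists_linearIndepOn_mem_conicHullOn [DecidableEq ι] (hx : x ∈ conicHullOn v s) :
    ∃ t ⊆ s, LinearIndepOn ℝ v (t : Set ι) ∧ x ∈ conicHullOn v t := by
  induction s using Finset.strongInduction with
  | H s ih =>
    by_cases hs : LinearIndepOn ℝ v (s : Set ι)
    · exact ⟨s, subset_rfl, hs, hx⟩
    · obtain ⟨j, hj, hxj⟩ := exists_mem_conicHullOn_erase hs hx
      obtain ⟨t, hts, ht, hxt⟩ := ih _ (Finset.erase_ssubset hj) hxj
      exact ⟨t, hts.trans (Finset.erase_subset _ _), ht, hxt⟩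

variable [TopologicalSpace E] [IsTopologicalAddGroup E] [ContinuousSMul ℝ E] [T2Space E]

lemma isClosed_conicHullOn_of_linearIndepOn (hs : LinearIndepOn ℝ v (s : Set ι)) :
    IsClosed (conicHullOn v s) := by
  classical
  have hemb := LinearMap.isClosedEmbedding_of_injective
    (LinearMap.ker_eq_bot.mpr (linearIndependent_iff_injective_fintypeLinearCombination.mp hs))
  convert hemb.isClosedMap _ (isClosed_Ici (a := (0 : s → ℝ))) using 1
  ext x
  constructor
  · rintro ⟨μ, hμ, rfl⟩
    exact ⟨fun i => μ i, fun i => hμ i, by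
      simp [Fintype.linearCombination_apply, Finset.sum_attach s (fun i => μ i • v i)]⟩
  · rintro ⟨μ, hμ, rfl⟩
    refine ⟨fun i => if h : i ∈ s then μ ⟨i, h⟩ else 0, fun i => ?_, ?_⟩
    · dsimp only
      split_ifs
      exacts [hμ _, le_rfl]
    · rw [← Finset.sum_coe_sort]
      simp [Fintype.linearCombination_apply]

lemma isClosed_conicHullOn : IsClosed (conicHullOn v s) := by
  classical
  let F : Finset (Finset ι) := s.powerset.filter fun t => LinearIndepOn ℝ v (t : Set ι)
  have hF : conicHullOn v s = ⋃ t ∈ F, conicHullOn v t := by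
    refine Subset.antisymm (fun x hx => ?_) (iUnion₂_subset fun t ht => conicHullOn_mono ?_)
    · obtain ⟨t, hts, ht, hxt⟩ := exists_linearIndepOn_mem_conicHullOn hx
      exact mem_iUnion₂.mpr ⟨t, by simp [F, hts, ht], hxt⟩
    · exact Finset.mem_powerset.mp (Finset.mem_filter.mp ht).1
  rw [hF]
  exact isClosed_biUnion_finset fun t ht =>
    isClosed_conicHullOn_of_linearIndepOn (Finset.mem_filter.mp ht).2

end ConicHull

section Separation

variable {ι : Type*} [Fintype ι]

lemma exists_dotProduct_add_mul_eq (f : StrongDual ℝ ((ι → ℝ) × ℝ)) :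
    ∃ (w : ι → ℝ) (t : ℝ), ∀ z s, f (z, s) = w ⬝ᵥ z + t * s := by
  classical
  refine ⟨fun i => f (fun j => if i = j then 1 else 0, 0), f (0, 1), fun z s => ?_⟩
  have hz := (f.toLinearMap.comp (LinearMap.inl ℝ (ι → ℝ) ℝ)).pi_apply_eq_sum_univ z
  simp only [LinearMap.coe_comp, Function.comp_apply, LinearMap.inl_apply,
    ContinuousLinearMap.coe_coe, smul_eq_mul] at hz
  have hzs : ((z, s) : (ι → ℝ) × ℝ) = (z, 0) + s • (0, 1) := by simp
  rw [hzs, map_add, map_smul, hz, dotProduct, smul_eq_mul]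
  simp only [mul_comm]

/-- The separating hyperplane cannot be vertical, since it separates two points on a vertical
line. -/
lemma exists_affine_lt_of_notMem {S : Set ((ι → ℝ) × ℝ)} (hconv : Convex ℝ S)
    (hclosed : IsClosed S) {x : ι → ℝ} {θ₀ θ₁ : ℝ} (h₀ : (x, θ₀) ∉ S) (h₁ : (x, θ₁) ∈ S)
    (h₀₁ : θ₀ < θ₁) :
    ∃ (α : ℝ) (β : ι → ℝ), θ₀ < α + β ⬝ᵥ x ∧ ∀ p ∈ S, α + β ⬝ᵥ p.1 < p.2 := by
  obtain ⟨f, u, hx₀, hS⟩ := geometric_hahn_banach_point_closed hconv hclosed h₀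
  obtain ⟨w, t, hf⟩ := exists_dotProduct_add_mul_eq f
  simp only [hf] at hx₀ hS
  have ht : 0 < t := by nlinarith [hS _ h₁]
  have key : ∀ z, u / t + (-t⁻¹ • w) ⬝ᵥ z = (u - w ⬝ᵥ z) / t := fun z => by
    rw [neg_smul, neg_dotProduct, smul_dotProduct, smul_eq_mul]
    ring
  refine ⟨u / t, -t⁻¹ • w, ?_, fun p hp => ?_⟩
  · rw [key, lt_div_iff₀ ht]
    linarith
  · rw [key, div_lt_iff₀ ht]
    linarith [hS p hp]

end Separation

namespace Matrix

variable {ι m : Type*} [Fintype ι] (A : Matrix m ι ℝ) (b : m → ℝ)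

lemma isCompact_setOf_mulVec_le (hbdd : Bornology.IsBounded {y | A *ᵥ y ≤ b}) :
    IsCompact {y | A *ᵥ y ≤ b} :=
  Metric.isCompact_of_isClosed_isBounded
    (isClosed_le (continuous_const.matrix_mulVec continuous_id) continuous_const) hbdd

lemma convex_setOf_mulVec_le : Convex ℝ {y | A *ᵥ y ≤ b} :=
  (convex_Iic b).linear_preimage (mulVecLin A)

/-- The points `(1 + s t)⁻¹ • (y₀ - s • w)`, `s ≥ 0`, are all feasible, and along them `c ⬝ᵥ y`
would be unbounded. -/
lemma dotProduct_add_mul_nonneg_of_forall_dotProduct_le {c w y₀ : ι → ℝ} {g t : ℝ}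
    (hy₀ : A *ᵥ y₀ ≤ b) (h : ∀ y, A *ᵥ y ≤ b → c ⬝ᵥ y ≤ g) (ht : 0 ≤ t)
    (hw : ∀ j, 0 ≤ (A *ᵥ w) j + t * b j) : 0 ≤ w ⬝ᵥ c + t * g := by
  by_contra! hδ
  have hray : ∀ s, 0 ≤ s → s * -(w ⬝ᵥ c + t * g) ≤ g - c ⬝ᵥ y₀ := by
    intro s hs
    have hpos : 0 < 1 + s * t := by positivity
    have hy : A *ᵥ ((1 + s * t)⁻¹ • (y₀ - s • w)) ≤ b := by
      intro j
      simp only [mulVec_smul, mulVec_sub, Pi.smul_apply, Pi.sub_apply, smul_eq_mul]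
      rw [inv_mul_le_iff₀ hpos]
      nlinarith [hy₀ j, mul_nonneg hs (hw j)]
    have := h _ hy
    rw [dotProduct_smul, dotProduct_sub, dotProduct_smul, smul_eq_mul, smul_eq_mul,
      inv_mul_le_iff₀ hpos, dotProduct_comm c w] at this
    linarith
  have := hray ((g - c ⬝ᵥ y₀ + 1) / -(w ⬝ᵥ c + t * g))
    (div_nonneg (by linarith [h y₀ hy₀]) (by linarith))
  rw [div_mul_cancel₀ _ (by linarith)] at this
  linarith

variable [Fintype m]

lemma dotProduct_le_of_nonneg_of_mulVec_le {η : m → ℝ} (hη : 0 ≤ η) {y : ι → ℝ}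
    (hy : A *ᵥ y ≤ b) : (Aᵀ *ᵥ η) ⬝ᵥ y ≤ b ⬝ᵥ η := by
  rw [mulVec_transpose, ← dotProduct_mulVec, dotProduct_comm b]
  exact dotProduct_le_dotProduct_of_nonneg_left hy hη

/-- The affine Farkas lemma: `(c, g)` lies in the closed cone generated by the rows `(A j, b j)`
and `(0, 1)`, since otherwise a separating functional would be a certificate excluded by
`dotProduct_add_mul_nonneg_of_forall_dotProduct_le`. -/
theorem exists_nonneg_transpose_mulVec_eq_of_forall_dotProduct_le {c : ι → ℝ} {g : ℝ}
    (hne : ∃ y, A *ᵥ y ≤ b) (h : ∀ y, A *ᵥ y ≤ b → c ⬝ᵥ y ≤ g) :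
    ∃ η, 0 ≤ η ∧ b ⬝ᵥ η ≤ g ∧ Aᵀ *ᵥ η = c := by
  classical
  let v : Option m → (ι → ℝ) × ℝ := fun o => o.elim (0, 1) fun j => (A j, b j)
  suffices (c, g) ∈ conicHullOn v Finset.univ by
    obtain ⟨μ, hμ, hμcg⟩ := this
    simp only [Fintype.sum_option, v, Option.elim, Prod.ext_iff, Prod.fst_add, Prod.snd_add,
      Prod.fst_sum, Prod.snd_sum, Prod.smul_mk, smul_zero, zero_add, smul_eq_mul, mul_one] at hμcg
    have : 0 ≤ μ none := hμ none
    refine ⟨μ ∘ some, fun j => hμ _, ?_, ?_⟩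
    · simp only [dotProduct, Function.comp_apply, mul_comm (b _)]
      linarith [hμcg.2]
    · simpa [mulVec_transpose, vecMul_eq_sum] using hμcg.1
  by_contra hcg
  obtain ⟨f, u, hfcg, hf⟩ :=
    geometric_hahn_banach_point_closed convex_conicHullOn isClosed_conicHullOn hcg
  have hfv : ∀ o, 0 ≤ f (v o) := fun o =>
    nonneg_of_forall_lt_of_mem_conicHullOn f.toLinearMap hf
      (mem_conicHullOn_self (v := v) (Finset.mem_univ o))
  have hu : u < 0 := by simpa using hf 0 zero_mem_conicHullOn
  obtain ⟨w, t, hwt⟩ := exists_dotProduct_add_mul_eq f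
  obtain ⟨y₀, hy₀⟩ := hne
  have := dotProduct_add_mul_nonneg_of_forall_dotProduct_le A b hy₀ h
    (by simpa [v, hwt] using hfv none)
    (fun j => by simpa [v, hwt, mulVec, dotProduct_comm w] using hfv (some j))
  rw [hwt] at hfcg
  linarith

theorem exists_nonneg_transpose_mulVec_eq_and_dotProduct_le_iff (hne : ∃ y, A *ᵥ y ≤ b)
    {c : ι → ℝ} {g : ℝ} :
    (∃ η, 0 ≤ η ∧ b ⬝ᵥ η ≤ g ∧ Aᵀ *ᵥ η = c) ↔ ∀ y, A *ᵥ y ≤ b → c ⬝ᵥ y ≤ g := by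
  refine ⟨?_, exists_nonneg_transpose_mulVec_eq_of_forall_dotProduct_le A b hne⟩
  rintro ⟨η, hη, hg, rfl⟩ y hy
  exact (dotProduct_le_of_nonneg_of_mulVec_le A b hη hy).trans hg

end Matrix

section ConvexHull

open Pointwise

lemma exists_mem_convexHull_iUnion_prod_Ici {E κ : Type*} [AddCommGroup E] [Module ℝ E]
    [Finite κ] {Q : κ → Set E} {g : κ → ℝ} {x : E} (hx : x ∈ convexHull ℝ (⋃ k, Q k)) :
    ∃ θ, (x, θ) ∈ convexHull ℝ (⋃ k, Q k ×ˢ Ici (g k)) := by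
  obtain ⟨M, hM⟩ := (finite_range g).bddAbove
  refine ⟨M, convexHull_mono (s := (⋃ k, Q k) ×ˢ {M}) ?_ ?_⟩
  · rintro ⟨y, _⟩ ⟨hy, rfl⟩
    obtain ⟨k, hk⟩ := mem_iUnion.mp hy
    exact mem_iUnion.mpr ⟨k, hk, hM (mem_range_self k)⟩
  · rw [convexHull_prod, convexHull_singleton]
    exact ⟨hx, rfl⟩

variable {E : Type*} [AddCommGroup E] [Module ℝ E] [TopologicalSpace E] [IsTopologicalAddGroup E]
  [ContinuousSMul ℝ E]

lemma isCompact_convexJoin {s t : Set E} (hs : IsCompact s) (ht : IsCompact t) :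
    IsCompact (convexJoin ℝ s t) := by
  have : convexJoin ℝ s t =
      (fun q : E × E × ℝ => (1 - q.2.2) • q.1 + q.2.2 • q.2.1) '' s ×ˢ t ×ˢ Icc 0 1 := by
    ext z
    simp only [mem_convexJoin, segment_eq_image, mem_image, mem_prod]
    constructor
    · rintro ⟨a, ha, b, hb, θ, hθ, rfl⟩
      exact ⟨(a, b, θ), ⟨ha, hb, hθ⟩, rfl⟩
    · rintro ⟨⟨a, b, θ⟩, ⟨ha, hb, hθ⟩, rfl⟩
      exact ⟨a, ha, b, hb, θ, hθ, rfl⟩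
  rw [this]
  exact (hs.prod (ht.prod isCompact_Icc)).image (by fun_prop)

lemma isCompact_convexHull_iUnion {κ : Type*} [Finite κ] {s : κ → Set E}
    (h : ∀ k, IsCompact (convexHull ℝ (s k))) : IsCompact (convexHull ℝ (⋃ k, s k)) := by
  classical
  cases nonempty_fintype κ
  suffices ∀ F : Finset κ, IsCompact (convexHull ℝ (⋃ k ∈ F, s k)) by
    simpa using this Finset.univ
  intro F
  induction F using Finset.induction_on with
  | empty => simp
  | insert k F _ ih =>
    rw [Finset.set_biUnion_insert]
    rcases (s k).eq_empty_or_nonempty with hs | hs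
    · simpa [hs] using ih
    rcases (⋃ k ∈ F, s k).eq_empty_or_nonempty with ht | ht
    · simpa [ht] using h k
    rw [convexHull_union hs ht]
    exact isCompact_convexJoin (h k) ih

lemma isClosed_convexHull_iUnion_prod_Ici [T1Space E] {κ : Type*} [Finite κ] {Q : κ → Set E}
    (g : κ → ℝ) (hQc : ∀ k, IsCompact (Q k)) (hQv : ∀ k, Convex ℝ (Q k)) :
    IsClosed (convexHull ℝ (⋃ k, Q k ×ˢ Ici (g k))) := by
  have hsum : ⋃ k, Q k ×ˢ Ici (g k) = (⋃ k, Q k ×ˢ {g k}) + ({0} : Set E) ×ˢ Ici 0 := by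
    simp [iUnion_add, prod_add_prod_comm, singleton_add]
  rw [hsum, convexHull_add,
    ((convex_singleton (𝕜 := ℝ) (0 : E)).prod (convex_Ici (0 : ℝ))).convexHull_eq]
  refine (isClosed_singleton.prod isClosed_Ici).add_left_of_isCompact
    (isCompact_convexHull_iUnion fun k => ?_)
  rw [((hQv k).prod (convex_singleton _)).convexHull_eq]
  exact (hQc k).prod isCompact_singleton

end ConvexHull

section Envelope

variable {ι κ : Type*} [Fintype ι] {Q : κ → Set (ι → ℝ)} {g : κ → ℝ}

lemma affine_le_of_mem_convexHull_iUnion_prod_Ici {α : ℝ} {β : ι → ℝ}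
    (h : ∀ k, ∀ y ∈ Q k, α + β ⬝ᵥ y ≤ g k) {p : (ι → ℝ) × ℝ}
    (hp : p ∈ convexHull ℝ (⋃ k, Q k ×ˢ Ici (g k))) : α + β ⬝ᵥ p.1 ≤ p.2 := by
  have hlin : IsLinearMap ℝ fun p : (ι → ℝ) × ℝ => β ⬝ᵥ p.1 - p.2 :=
    ⟨fun p q => by simp only [Prod.fst_add, Prod.snd_add, dotProduct_add]; ring,
      fun r p => by simp only [Prod.smul_fst, Prod.smul_snd, dotProduct_smul, smul_eq_mul]; ring⟩
  have hset : {p : (ι → ℝ) × ℝ | α + β ⬝ᵥ p.1 ≤ p.2} = {p | β ⬝ᵥ p.1 - p.2 ≤ -α} := by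
    ext p
    change α + β ⬝ᵥ p.1 ≤ p.2 ↔ β ⬝ᵥ p.1 - p.2 ≤ -α
    constructor <;> intro <;> linarith
  have hconv : Convex ℝ {p : (ι → ℝ) × ℝ | α + β ⬝ᵥ p.1 ≤ p.2} :=
    hset ▸ convex_halfSpace_le hlin (-α)
  refine convexHull_min (iUnion_subset fun k q hq => ?_) hconv hp
  exact (h k q.1 hq.1).trans hq.2

theorem sInf_convexHull_iUnion_prod_Ici_eq_sSup [Finite κ] (hQc : ∀ k, IsCompact (Q k))
    (hQv : ∀ k, Convex ℝ (Q k)) {x : ι → ℝ} (hx : x ∈ convexHull ℝ (⋃ k, Q k)) :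
    sInf {θ | (x, θ) ∈ convexHull ℝ (⋃ k, Q k ×ˢ Ici (g k))} =
      sSup {v | ∃ ab : ℝ × (ι → ℝ), (∀ k, ∀ y ∈ Q k, ab.1 + ab.2 ⬝ᵥ y ≤ g k) ∧
        v = ab.1 + ab.2 ⬝ᵥ x} := by
  set S := convexHull ℝ (⋃ k, Q k ×ˢ Ici (g k))
  set D := {v | ∃ ab : ℝ × (ι → ℝ), (∀ k, ∀ y ∈ Q k, ab.1 + ab.2 ⬝ᵥ y ≤ g k) ∧
    v = ab.1 + ab.2 ⬝ᵥ x}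
  obtain ⟨θ₁, hθ₁⟩ := exists_mem_convexHull_iUnion_prod_Ici (g := g) hx
  obtain ⟨c, hc⟩ := (finite_range g).bddBelow
  have hc' : ∀ k, ∀ y ∈ Q k, c + (0 : ι → ℝ) ⬝ᵥ y ≤ g k := fun k y _ => by
    simpa using hc (mem_range_self k)
  have hweak : ∀ v ∈ D, ∀ θ ∈ {θ | (x, θ) ∈ S}, v ≤ θ := by
    rintro _ ⟨ab, hab, rfl⟩ θ hθ
    exact affine_le_of_mem_convexHull_iUnion_prod_Ici hab hθ
  have hbdd : BddBelow {θ | (x, θ) ∈ S} :=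
    ⟨c, fun θ hθ => by simpa using affine_le_of_mem_convexHull_iUnion_prod_Ici hc' hθ⟩
  apply le_antisymm
  · refine le_of_forall_lt fun θ₀ hθ₀ => ?_
    have h₀ : (x, θ₀) ∉ S := fun h => (csInf_le hbdd h).not_gt hθ₀
    obtain ⟨α, β, hlt, hαβ⟩ := exists_affine_lt_of_notMem (convex_convexHull ℝ _)
      (isClosed_convexHull_iUnion_prod_Ici g hQc hQv) h₀ hθ₁ (hθ₀.trans_le (csInf_le hbdd hθ₁))
    have hmin : ∀ k, ∀ y ∈ Q k, α + β ⬝ᵥ y ≤ g k := fun k y hy =>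
      (hαβ (y, g k) (subset_convexHull ℝ _ (mem_iUnion_of_mem k ⟨hy, le_refl (g k)⟩))).le
    exact hlt.trans_le (le_csSup ⟨θ₁, fun v hv => hweak v hv θ₁ hθ₁⟩ ⟨(α, β), hmin, rfl⟩)
  · exact csSup_le ⟨c, (c, 0), hc', by simp⟩ fun v hv => le_csInf ⟨θ₁, hθ₁⟩ (hweak v hv)

end Envelope

theorem piecewise_convex_envelope_general (n : ℕ) (K : ℕ)
    (m : Fin K → ℕ)
    (A : (k : Fin K) → Matrix (Fin (m k)) (Fin n) ℝ)
    (b : (k : Fin K) → Fin (m k) → ℝ)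
    (gk : Fin K → ℝ)
    (hne : ∀ k, {y : Fin n → ℝ | ∀ j, (A k).mulVec y j ≤ b k j}.Nonempty)
    (hbdd : ∀ k, Bornology.IsBounded {y : Fin n → ℝ | ∀ j, (A k).mulVec y j ≤ b k j}) :
    ∀ x ∈ convexHull ℝ (⋃ k, {y : Fin n → ℝ | ∀ j, (A k).mulVec y j ≤ b k j}),
      sInf {θ : ℝ | (x, θ) ∈ convexHull ℝ
          (⋃ k, {p : (Fin n → ℝ) × ℝ | (∀ j, (A k).mulVec p.1 j ≤ b k j) ∧ gk k ≤ p.2})} =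
      sSup {v : ℝ | ∃ ab : ℝ × (Fin n → ℝ),
        (∀ k, ∃ η : Fin (m k) → ℝ, (∀ j, 0 ≤ η j) ∧
          ab.1 + ∑ j, b k j * η j ≤ gk k ∧ ∀ l, ∑ j, A k j l * η j = ab.2 l) ∧
        v = ab.1 + ∑ l, ab.2 l * x l} := by
  intro x hx
  have hdual : ∀ (ab : ℝ × (Fin n → ℝ)) k, (∃ η : Fin (m k) → ℝ, (∀ j, 0 ≤ η j) ∧
      ab.1 + ∑ j, b k j * η j ≤ gk k ∧ ∀ l, ∑ j, A k j l * η j = ab.2 l) ↔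
      ∀ y ∈ {y : Fin n → ℝ | A k *ᵥ y ≤ b k}, ab.1 + ab.2 ⬝ᵥ y ≤ gk k := fun ab k => by
    have := (A k).exists_nonneg_transpose_mulVec_eq_and_dotProduct_le_iff (b k) (hne k)
      (c := ab.2) (g := gk k - ab.1)
    simp only [le_sub_iff_add_le', funext_iff] at this
    exact this
  simp only [hdual]
  exact sInf_convexHull_iUnion_prod_Ici_eq_sSup
    (fun k => (A k).isCompact_setOf_mulVec_le (b k) (hbdd k))
    (fun k => (A k).convex_setOf_mulVec_le (b k)) hx

/-- Convex envelope of a piecewise constant function on polyhedral pieces: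
for every `x` in the convex hull of the union of the polyhedra, the envelope
value `inf {θ : (x, θ) ∈ conv G}` equals `sup {α + βᵀx : (α, β) ∈ E}`. -/
theorem piecewise_convex_envelope (n : ℕ) (hn : 1 ≤ n) (K : ℕ) (hK : 1 ≤ K)
    (m : Fin K → ℕ)
    (A : (k : Fin K) → Matrix (Fin (m k)) (Fin n) ℝ)
    (b : (k : Fin K) → Fin (m k) → ℝ)
    (gk : Fin K → ℝ)
    (hne : ∀ k, {y : Fin n → ℝ | ∀ j, (A k).mulVec y j ≤ b k j}.Nonempty)
    (hbdd : ∀ k, Bornology.IsBounded {y : Fin n → ℝ | ∀ j, (A k).mulVec y j ≤ b k j}) :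
    ∀ x ∈ convexHull ℝ (⋃ k, {y : Fin n → ℝ | ∀ j, (A k).mulVec y j ≤ b k j}),
      sInf {θ : ℝ | (x, θ) ∈ convexHull ℝ
          (⋃ k, {p : (Fin n → ℝ) × ℝ | (∀ j, (A k).mulVec p.1 j ≤ b k j) ∧ gk k ≤ p.2})} =
      sSup {v : ℝ | ∃ ab : ℝ × (Fin n → ℝ),
        (∀ k, ∃ η : Fin (m k) → ℝ, (∀ j, 0 ≤ η j) ∧
          ab.1 + ∑ j, b k j * η j ≤ gk k ∧ ∀ l, ∑ j, A k j l * η j = ab.2 l) ∧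
        v = ab.1 + ∑ l, ab.2 l * x l} :=
  piecewise_convex_envelope_general n K m A b gk hne hbdd
end

section
/- Lipschitz continuity of a parametric convex value function under a Slater condition: Let E = ℝ^{n_1} and F = ℝ^{n_2}, let Z ⊆ F be a nonempty compact convex set, let ℓ : F → ℝ be Lipschitz continuous, let m ≥ 1 and L : E × F → ℝ^m be Lipschitz continuous such that for every x ∈ E and every component j, the map z ↦ L(x, z)_j is convex on Z, and suppose there exists δ > 0 such that for every x ∈ E there exists z ∈ Z with L(x, z)_j < −δ for all j. Then the value function V(x) := inf { ℓ(z) : z ∈ Z, L(x, z)_j ≤ 0 for all j } is Lipschitz continuous on E. -/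
/-!
A point `z` feasible at parameter `y` violates the constraints at `x` by at most
`K_L ‖x - y‖`. Moving from `z` towards a Slater point for `x` a fraction at most
`K_L ‖x - y‖ / δ` of the way restores feasibility by convexity of the constraints, and moves `z`
by at most `K_L ‖x - y‖ diam Z / δ`, so the value changes by at most `K_ℓ K_L diam Z / δ ‖x - y‖`.
-/

open Set

-- The witness lies a fraction `ε / (ε + δ)` of the way from `z₀` to `z₁`.
theorem Convex.exists_forall_le_zero_dist_le {F ι : Type*} [NormedAddCommGroup F]
    [NormedSpace ℝ F] {Z : Set F} (hZ : Convex ℝ Z) {g : ι → F → ℝ}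
    (hg : ∀ j, ConvexOn ℝ Z (g j)) {z₀ z₁ : F} (h₀ : z₀ ∈ Z) (h₁ : z₁ ∈ Z) {ε δ : ℝ}
    (hε : 0 ≤ ε) (hδ : 0 < δ) (hg₀ : ∀ j, g j z₀ ≤ ε) (hg₁ : ∀ j, g j z₁ ≤ -δ) :
    ∃ w ∈ Z, (∀ j, g j w ≤ 0) ∧ dist w z₀ ≤ ε / δ * dist z₀ z₁ := by
  set t := ε / (ε + δ)
  have hεδ : 0 < ε + δ := by linarith
  have ht₀ : 0 ≤ t := by positivity
  have ht₁ : t ≤ 1 := (div_le_one hεδ).2 (by linarith)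
  refine ⟨AffineMap.lineMap z₀ z₁ t, hZ.lineMap_mem h₀ h₁ ⟨ht₀, ht₁⟩, fun j => ?_, ?_⟩
  · calc g j (AffineMap.lineMap z₀ z₁ t)
          ≤ (1 - t) * g j z₀ + t * g j z₁ := by
            simpa only [AffineMap.lineMap_apply_module, smul_eq_mul] using
              (hg j).2 h₀ h₁ (sub_nonneg.2 ht₁) ht₀ (sub_add_cancel 1 t)
        _ ≤ (1 - t) * ε + t * -δ := by gcongr <;> [exact hg₀ j; exact hg₁ j]
        _ = 0 := by unfold t; field_simp; ring
  · rw [dist_lineMap_left, Real.norm_of_nonneg ht₀]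
    gcongr
    exact div_le_div_of_nonneg_left hε hδ (by linarith)

theorem LipschitzWith.csInf_image_le_add_mul {α : Type*} [PseudoMetricSpace α] {ℓ : α → ℝ}
    {K : NNReal} (hℓ : LipschitzWith K ℓ) {s t : Set α} (hs : BddBelow (ℓ '' s))
    (ht : t.Nonempty) {r : ℝ} (hst : ∀ z ∈ t, ∃ w ∈ s, dist w z ≤ r) :
    sInf (ℓ '' s) ≤ sInf (ℓ '' t) + K * r := by
  rw [← sub_le_iff_le_add]
  refine le_csInf (ht.image ℓ) ?_
  rintro _ ⟨z, hz, rfl⟩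
  obtain ⟨w, hw, hwz⟩ := hst z hz
  rw [sub_le_iff_le_add]
  calc sInf (ℓ '' s) ≤ ℓ w := csInf_le hs (mem_image_of_mem ℓ hw)
    _ ≤ ℓ z + K * dist w z := hℓ.le_add_mul w z
    _ ≤ ℓ z + K * r := by gcongr

theorem LipschitzWith.apply_le_apply_add_mul_dist_fst {E F ι : Type*} [PseudoMetricSpace E]
    [PseudoMetricSpace F] [Fintype ι] {L : E × F → ι → ℝ} {K : NNReal} (hL : LipschitzWith K L)
    (x y : E) (z : F) (j : ι) : L (x, z) j ≤ L (y, z) j + K * dist x y := by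
  simpa using ((LipschitzWith.eval j).comp (hL.comp (LipschitzWith.prodMk_right z))).le_add_mul x y

section ValueFunction

variable {E F ι : Type*} [PseudoMetricSpace E] [NormedAddCommGroup F] [NormedSpace ℝ F]
  [Fintype ι]

def feasibleSet (Z : Set F) (L : E × F → ι → ℝ) (x : E) : Set F :=
  {z | z ∈ Z ∧ ∀ j, L (x, z) j ≤ 0}

noncomputable def valueFunction (ℓ : F → ℝ) (Z : Set F) (L : E × F → ι → ℝ) (x : E) : ℝ :=
  sInf (ℓ '' feasibleSet Z L x)

variable {Z : Set F} {L : E × F → ι → ℝ} {K : NNReal} {δ : ℝ}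

theorem exists_mem_feasibleSet_dist_le (hZ : Convex ℝ Z)
    (hconv : ∀ x j, ConvexOn ℝ Z (fun z => L (x, z) j)) (hL : LipschitzWith K L) (hδ : 0 < δ)
    {x y : E} {z zₛ : F} (hz : z ∈ feasibleSet Z L y) (hzₛ : zₛ ∈ Z)
    (hslater : ∀ j, L (x, zₛ) j ≤ -δ) :
    ∃ w ∈ feasibleSet Z L x, dist w z ≤ K * dist x y / δ * dist z zₛ := by
  have hzx : ∀ j, L (x, z) j ≤ K * dist x y := fun j => by
    linarith [hL.apply_le_apply_add_mul_dist_fst x y z j, hz.2 j]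
  obtain ⟨w, hwZ, hw, hwz⟩ :=
    hZ.exists_forall_le_zero_dist_le (hconv x) hz.1 hzₛ (by positivity) hδ hzx hslater
  exact ⟨w, ⟨hwZ, hw⟩, hwz⟩

theorem valueFunction_le_add_mul {ℓ : F → ℝ} {Kℓ : NNReal} (hℓ : LipschitzWith Kℓ ℓ)
    (hZc : IsCompact Z) (hZ : Convex ℝ Z)
    (hconv : ∀ x j, ConvexOn ℝ Z (fun z => L (x, z) j)) (hL : LipschitzWith K L) (hδ : 0 < δ)
    (hslater : ∀ x, ∃ z ∈ Z, ∀ j, L (x, z) j ≤ -δ) (x y : E) :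
    valueFunction ℓ Z L x ≤
      valueFunction ℓ Z L y + Kℓ * K * Metric.diam Z / δ * dist x y := by
  obtain ⟨zₛ, hzₛ, hzₛL⟩ := hslater x
  obtain ⟨zy, hzy, hzyL⟩ := hslater y
  have hbdd : BddBelow (ℓ '' feasibleSet Z L x) :=
    (hZc.image hℓ.continuous).bddBelow.mono (image_mono fun _ hz => hz.1)
  have hne : (feasibleSet Z L y).Nonempty := ⟨zy, hzy, fun j => (hzyL j).trans (by linarith)⟩
  calc valueFunction ℓ Z L x
      ≤ valueFunction ℓ Z L y + Kℓ * (K * dist x y / δ * Metric.diam Z) := by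
        refine hℓ.csInf_image_le_add_mul hbdd hne fun z hz => ?_
        obtain ⟨w, hw, hwz⟩ := exists_mem_feasibleSet_dist_le hZ hconv hL hδ hz hzₛ hzₛL
        refine ⟨w, hw, hwz.trans ?_⟩
        gcongr
        exact Metric.dist_le_diam_of_mem hZc.isBounded hz.1 hzₛ
    _ = valueFunction ℓ Z L y + Kℓ * K * Metric.diam Z / δ * dist x y := by ring

end ValueFunction

theorem value_function_lipschitz_general (n₁ n₂ : ℕ) (m : ℕ)
    (Z : Set (Fin n₂ → ℝ)) (hZc : IsCompact Z) (hZconv : Convex ℝ Z)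
    (ℓ : (Fin n₂ → ℝ) → ℝ) (hℓ : ∃ K : NNReal, LipschitzWith K ℓ)
    (L : (Fin n₁ → ℝ) × (Fin n₂ → ℝ) → Fin m → ℝ)
    (hL : ∃ K : NNReal, LipschitzWith K L)
    (hconv : ∀ (x : Fin n₁ → ℝ) (j : Fin m), ConvexOn ℝ Z (fun z => L (x, z) j))
    (hslater : ∃ δ > (0 : ℝ), ∀ x : Fin n₁ → ℝ, ∃ z ∈ Z, ∀ j, L (x, z) j < -δ) :
    ∃ K : NNReal, LipschitzWith K
      (fun x : Fin n₁ → ℝ => sInf (ℓ '' {z | z ∈ Z ∧ ∀ j, L (x, z) j ≤ 0})) := by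
  obtain ⟨Kℓ, hKℓ⟩ := hℓ
  obtain ⟨KL, hKL⟩ := hL
  obtain ⟨δ, hδ, hsl⟩ := hslater
  have hsl' : ∀ x, ∃ z ∈ Z, ∀ j, L (x, z) j ≤ -δ :=
    fun x => (hsl x).imp fun _ ⟨hz, hzL⟩ => ⟨hz, fun j => (hzL j).le⟩
  exact ⟨_, LipschitzWith.of_le_add_mul' _ <|
    valueFunction_le_add_mul hKℓ hZc hZconv hconv hKL hδ hsl'⟩

/-- Lipschitz continuity of a parametric convex value function under a uniform
Slater condition. -/
theorem value_function_lipschitz (n₁ n₂ : ℕ) (m : ℕ) (hm : 1 ≤ m)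
    (Z : Set (Fin n₂ → ℝ)) (hZne : Z.Nonempty) (hZc : IsCompact Z) (hZconv : Convex ℝ Z)
    (ℓ : (Fin n₂ → ℝ) → ℝ) (hℓ : ∃ K : NNReal, LipschitzWith K ℓ)
    (L : (Fin n₁ → ℝ) × (Fin n₂ → ℝ) → Fin m → ℝ)
    (hL : ∃ K : NNReal, LipschitzWith K L)
    (hconv : ∀ (x : Fin n₁ → ℝ) (j : Fin m), ConvexOn ℝ Z (fun z => L (x, z) j))
    (hslater : ∃ δ > (0 : ℝ), ∀ x : Fin n₁ → ℝ, ∃ z ∈ Z, ∀ j, L (x, z) j < -δ) :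
    ∃ K : NNReal, LipschitzWith K
      (fun x : Fin n₁ → ℝ => sInf (ℓ '' {z | z ∈ Z ∧ ∀ j, L (x, z) j ≤ 0})) :=
  value_function_lipschitz_general n₁ n₂ m Z hZc hZconv ℓ hℓ L hL hconv hslater
end
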